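/- arXiv:1007.1575 — 7 statements merged into one kernel-verified Lean document; each statement's English description precedes it below -/
import Mathlib

section
/- Let P, Q1, Q2 be orthogonal projections on H with ‖P − Q1‖ < 1 and ‖P − Q2‖ < 1, and let X1, X2 be the angular operators for P such that Ran Q1 = G(X1) and Ran Q2 = G(X2). Define the unitary operator U1 = (P + X1)(I + X1*X1)^{-1/2} P + (P⊥ − X1*)(I + X1 X1*)^{-1/2} P⊥ on H (which satisfies P = U1* Q1 U1). Then the orthogonal projection Q := U1* Q2 U1 admits the factorization Q = A^{-1/2} B C B* A^{-1/2}, where A = I + X1*X1 + X1X1*, B = (I + X1*X2 + X2 − X1) P, and C = (I + X2*X2)^{-1}. -/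
open ContinuousLinearMap

/-- `P` is an orthogonal projection: `P = P* = P²`. -/
def IsOrthogonalProjection {H : Type*} [NormedAddCommGroup H] [InnerProductSpace ℂ H]
    [CompleteSpace H] (P : H →L[ℂ] H) : Prop :=
  IsSelfAdjoint P ∧ P * P = P

/-- `X` is an angular operator for the orthogonal projection `P`: `X = P⊥ X P`. -/
def IsAngularOperator {H : Type*} [NormedAddCommGroup H] [InnerProductSpace ℂ H]
    [CompleteSpace H] (P X : H →L[ℂ] H) : Prop :=
  X = (1 - P) * X * P

/-- `Ran Q` is the graph subspace `G(X) = {u + X u : u ∈ Ran P}`. -/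
def HasGraphRange {H : Type*} [NormedAddCommGroup H] [InnerProductSpace ℂ H]
    [CompleteSpace H] (P X Q : H →L[ℂ] H) : Prop :=
  Set.range ⇑Q = (fun u => u + X u) '' Set.range ⇑P

/-- The unitary operator
`U₁ = (P + X₁)(I + X₁*X₁)^{-1/2} P + (P⊥ − X₁*)(I + X₁X₁*)^{-1/2} P⊥`. -/
noncomputable def angularUnitary {H : Type*} [NormedAddCommGroup H] [InnerProductSpace ℂ H]
    [CompleteSpace H] (P X₁ : H →L[ℂ] H) : H →L[ℂ] H :=
  (P + X₁) * Ring.inverse (CFC.sqrt (1 + adjoint X₁ * X₁)) * P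
    + ((1 - P) - adjoint X₁) * Ring.inverse (CFC.sqrt (1 + X₁ * adjoint X₁)) * (1 - P)

/-!
Since `X₁*X₁` acts on `Ran P` and `X₁X₁*` on `Ran P⊥`, the operator `A` is block diagonal,
`A = (I + X₁*X₁) P + (I + X₁X₁*) P⊥`, hence
`A^{-1/2} = (I + X₁*X₁)^{-1/2} P + (I + X₁X₁*)^{-1/2} P⊥`.
The projection onto the graph of `X₂` is `Q₂ = T C T*` with `T = P + X₂`. The relations
`P X = 0`, `X P = X` satisfied by angular operators give `T* U₁ = B* A^{-1/2}`, and therefore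
`U₁* Q₂ U₁ = (T* U₁)* C (T* U₁) = A^{-1/2} B C B* A^{-1/2}`.
-/

theorem Commute.ringInverse_right {M₀ : Type*} [MonoidWithZero M₀] {a b : M₀}
    (h : Commute a b) : Commute a (Ring.inverse b) := by
  by_cases hb : IsUnit b
  · obtain ⟨u, rfl⟩ := hb
    rw [Ring.inverse_unit]
    exact h.units_inv_right
  · rw [Ring.inverse_non_unit b hb]
    exact Commute.zero_right a

section BlockDiagonal

variable {R : Type*} [Ring R] {p : R}

theorem mul_add_mul_one_sub_mul_mul_add_mul_one_sub (hp : IsIdempotentElem p) {a b c d : R}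
    (hc : Commute p c) (hd : Commute p d) :
    (a * p + b * (1 - p)) * (c * p + d * (1 - p)) = a * c * p + b * d * (1 - p) := by
  have hq : IsIdempotentElem (1 - p) := hp.one_sub
  have hd' : Commute (1 - p) d := (Commute.one_left d).sub_left hd
  have hc' : Commute (1 - p) c := (Commute.one_left c).sub_left hc
  have hpq : p * (1 - p) = 0 := by rw [mul_sub, mul_one, hp.eq, sub_self]
  have hqp : (1 - p) * p = 0 := by rw [sub_mul, one_mul, hp.eq, sub_self]
  simp only [add_mul, mul_add, mul_assoc, ← hc.eq, ← hd'.eq]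
  simp only [← mul_assoc p, ← mul_assoc (1 - p), hp.eq, hq.eq, hpq, hqp, zero_mul, mul_zero,
    add_zero, zero_add]

theorem Ring.inverse_mul_add_mul_one_sub (hp : IsIdempotentElem p) {s t : R}
    (hs : IsUnit s) (ht : IsUnit t) (hps : Commute p s) (hpt : Commute p t) :
    Ring.inverse (s * p + t * (1 - p)) = Ring.inverse s * p + Ring.inverse t * (1 - p) := by
  have hinv : (Ring.inverse s * p + Ring.inverse t * (1 - p)) * (s * p + t * (1 - p)) = 1 := by
    rw [mul_add_mul_one_sub_mul_mul_add_mul_one_sub hp hps hpt, Ring.inverse_mul_cancel s hs,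
      Ring.inverse_mul_cancel t ht]
    simp
  have hinv' : (s * p + t * (1 - p)) * (Ring.inverse s * p + Ring.inverse t * (1 - p)) = 1 := by
    rw [mul_add_mul_one_sub_mul_mul_add_mul_one_sub hp hps.ringInverse_right
      hpt.ringInverse_right, Ring.mul_inverse_cancel s hs, Ring.mul_inverse_cancel t ht]
    simp
  exact Ring.inverse_unit ⟨_, _, hinv', hinv⟩

end BlockDiagonal

theorem star_mul_conj_mul_of_star_mul_eq {R : Type*} [Monoid R] [StarMul R] {U V W C : R}
    (h : star V * U = W) : star U * (V * C * star V) * U = star W * C * W := by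
  rw [← h, star_mul, star_star]
  simp only [mul_assoc]

section Angular

variable {R : Type*} [Ring R] {p x y : R}

theorem proj_mul_angular_eq_zero (hp : IsIdempotentElem p) (hx : x = (1 - p) * x * p) :
    p * x = 0 := by
  rw [hx, ← mul_assoc, ← mul_assoc, mul_sub, mul_one, hp.eq, sub_self, zero_mul, zero_mul]

theorem angular_mul_proj_eq_self (hp : IsIdempotentElem p) (hx : x = (1 - p) * x * p) :
    x * p = x := by
  rw [hx, mul_assoc, hp.eq]

theorem angular_mul_angular_eq_zero (hp : IsIdempotentElem p) (hx : x = (1 - p) * x * p)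
    (hy : y = (1 - p) * y * p) : x * y = 0 := by
  rw [← angular_mul_proj_eq_self hp hx, mul_assoc, proj_mul_angular_eq_zero hp hy, mul_zero]

variable [StarRing R]

theorem star_angular_mul_proj_eq_zero (hp : IsStarProjection p) (hx : x = (1 - p) * x * p) :
    star x * p = 0 := by
  rw [← hp.isSelfAdjoint.star_eq, ← star_mul, proj_mul_angular_eq_zero hp.isIdempotentElem hx,
    star_zero]

theorem proj_mul_star_angular_eq_self (hp : IsStarProjection p) (hx : x = (1 - p) * x * p) :
    p * star x = star x := by
  rw [← hp.isSelfAdjoint.star_eq, ← star_mul, angular_mul_proj_eq_self hp.isIdempotentElem hx]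

theorem proj_add_star_angular_mul_proj_add_angular (hp : IsStarProjection p)
    (hx : x = (1 - p) * x * p) (hy : y = (1 - p) * y * p) :
    (p + star y) * (p + x) = p + star y * x := by
  rw [add_mul, mul_add, mul_add, hp.isIdempotentElem.eq, proj_mul_angular_eq_zero
    hp.isIdempotentElem hx, star_angular_mul_proj_eq_zero hp hy, add_zero, zero_add]

theorem proj_add_star_angular_mul_one_sub_sub_star_angular (hp : IsStarProjection p)
    (hx : x = (1 - p) * x * p) (hy : y = (1 - p) * y * p) :
    (p + star y) * ((1 - p) - star x) = star y - star x := by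
  have hyx : star y * star x = 0 := by
    rw [← star_mul, angular_mul_angular_eq_zero hp.isIdempotentElem hx hy, star_zero]
  simp only [add_mul, mul_sub, mul_one, hp.isIdempotentElem.eq, proj_mul_star_angular_eq_self hp hx,
    star_angular_mul_proj_eq_zero hp hy, hyx]
  abel

-- With `a`, `b` the inverse square roots of `1 + x* x`, `1 + x x*`, this is
-- `(P + X₂)* U₁ = B* A^{-1/2}`.
theorem proj_add_star_angular_mul_unitaryForm (hp : IsStarProjection p) {a b : R}
    (hx : x = (1 - p) * x * p) (hy : y = (1 - p) * y * p) (ha : Commute p a) (hb : Commute p b) :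
    (p + star y) * ((p + x) * a * p + ((1 - p) - star x) * b * (1 - p)) =
      star ((1 + star x * y + y - x) * p) * (a * p + b * (1 - p)) := by
  have hstarB : star ((1 + star x * y + y - x) * p) = p + star y * x + star y - star x := by
    simp only [star_mul, star_sub, star_add, star_one, star_star, hp.isSelfAdjoint.star_eq,
      mul_sub, mul_add, mul_one, ← mul_assoc, proj_mul_star_angular_eq_self hp hx,
      proj_mul_star_angular_eq_self hp hy]
  have hap : p * (a * p) = a * p := by rw [← mul_assoc, ha.eq, mul_assoc, hp.isIdempotentElem.eq]
  have hbq : p * (b * (1 - p)) = 0 := by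
    rw [← mul_assoc, hb.eq, mul_assoc, hp.isIdempotentElem.mul_one_sub_self, mul_zero]
  have hstar : ∀ {z : R}, z = (1 - p) * z * p → star z * (a * p) = 0 := fun hz => by
    rw [← hap, ← mul_assoc, star_angular_mul_proj_eq_zero hp hz, zero_mul]
  have hxbq : x * (b * (1 - p)) = 0 := by
    rw [← angular_mul_proj_eq_self hp.isIdempotentElem hx, mul_assoc, hbq, mul_zero]
  calc (p + star y) * ((p + x) * a * p + ((1 - p) - star x) * b * (1 - p))
      = (p + star y) * (p + x) * (a * p) + (p + star y) * ((1 - p) - star x) * (b * (1 - p)) := by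
        rw [mul_add]; simp only [mul_assoc]
    _ = (p + star y * x) * (a * p) + (star y - star x) * (b * (1 - p)) := by
        rw [proj_add_star_angular_mul_proj_add_angular hp hx hy,
          proj_add_star_angular_mul_one_sub_sub_star_angular hp hx hy]
    _ = _ := by
        have hpbq : (p + star y * x) * (b * (1 - p)) = 0 := by
          rw [add_mul, mul_assoc, hbq, hxbq, mul_zero, add_zero]
        have hap' : (star y - star x) * (a * p) = 0 := by
          rw [sub_mul, hstar hx, hstar hy, sub_zero]
        rw [hstarB, add_sub_assoc, mul_add, add_mul (p + star y * x),
          add_mul (p + star y * x), hpbq, hap', add_zero, zero_add]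

theorem commute_proj_one_add_star_angular_mul_self (hp : IsStarProjection p)
    (hx : x = (1 - p) * x * p) : Commute p (1 + star x * x) := by
  refine (Commute.one_right p).add_right ?_
  change p * (star x * x) = star x * x * p
  rw [← mul_assoc, proj_mul_star_angular_eq_self hp hx, mul_assoc,
    angular_mul_proj_eq_self hp.isIdempotentElem hx]

theorem commute_proj_one_add_angular_mul_star_self (hp : IsStarProjection p)
    (hx : x = (1 - p) * x * p) : Commute p (1 + x * star x) := by
  refine (Commute.one_right p).add_right ?_
  change p * (x * star x) = x * star x * p
  rw [← mul_assoc, proj_mul_angular_eq_zero hp.isIdempotentElem hx, mul_assoc,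
    star_angular_mul_proj_eq_zero hp hx, zero_mul, mul_zero]

theorem one_add_star_angular_mul_self_add_mul_star_self (hp : IsStarProjection p)
    (hx : x = (1 - p) * x * p) :
    1 + star x * x + x * star x = (1 + star x * x) * p + (1 + x * star x) * (1 - p) := by
  have h1 : star x * x * p = star x * x := by
    rw [mul_assoc, angular_mul_proj_eq_self hp.isIdempotentElem hx]
  have h2 : x * star x * p = 0 := by
    rw [mul_assoc, star_angular_mul_proj_eq_zero hp hx, mul_zero]
  simp only [add_mul, mul_sub, one_mul, mul_one, h1, h2]
  abel

end Angular

section CStarAlgebra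

variable {A : Type*} [CStarAlgebra A] [PartialOrder A] [StarOrderedRing A]

theorem isStrictlyPositive_one_add_star_mul_self (x : A) : IsStrictlyPositive (1 + star x * x) :=
  isStrictlyPositive_one.add_nonneg (star_mul_self_nonneg x)

theorem isStrictlyPositive_one_add_mul_star_self (x : A) : IsStrictlyPositive (1 + x * star x) :=
  isStrictlyPositive_one.add_nonneg (mul_star_self_nonneg x)

theorem Commute.cfcSqrt_right {a b : A} (h : Commute a b) : Commute a (CFC.sqrt b) := by
  rw [CFC.sqrt_eq_cfc]
  exact (h.symm.cfc_nnreal _).symm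

theorem CFC.sqrt_mul_add_mul_one_sub {p a b : A} (hp : IsStarProjection p) (ha : 0 ≤ a)
    (hb : 0 ≤ b) (hpa : Commute p a) (hpb : Commute p b) :
    CFC.sqrt (a * p + b * (1 - p)) = CFC.sqrt a * p + CFC.sqrt b * (1 - p) := by
  refine CFC.sqrt_unique ?_ ?_
  · rw [mul_add_mul_one_sub_mul_mul_add_mul_one_sub hp.isIdempotentElem hpa.cfcSqrt_right
      hpb.cfcSqrt_right, CFC.sqrt_mul_sqrt_self a, CFC.sqrt_mul_sqrt_self b]
  · exact add_nonneg
      (Commute.mul_nonneg (CFC.sqrt_nonneg a) hp.nonneg hpa.cfcSqrt_right.symm)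
      (Commute.mul_nonneg (CFC.sqrt_nonneg b) hp.one_sub.nonneg
        ((Commute.one_left b).sub_left hpb).cfcSqrt_right.symm)

theorem ringInverse_sqrt_one_add_star_angular_mul_self_add_mul_star_self {p x : A}
    (hp : IsStarProjection p) (hx : x = (1 - p) * x * p) :
    Ring.inverse (CFC.sqrt (1 + star x * x + x * star x)) =
      Ring.inverse (CFC.sqrt (1 + star x * x)) * p
        + Ring.inverse (CFC.sqrt (1 + x * star x)) * (1 - p) := by
  have hcomm := commute_proj_one_add_star_angular_mul_self hp hx
  have hcomm' := commute_proj_one_add_angular_mul_star_self hp hx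
  have hpos := isStrictlyPositive_one_add_star_mul_self x
  have hpos' := isStrictlyPositive_one_add_mul_star_self x
  rw [one_add_star_angular_mul_self_add_mul_star_self hp hx,
    CFC.sqrt_mul_add_mul_one_sub hp hpos.nonneg hpos'.nonneg hcomm hcomm',
    Ring.inverse_mul_add_mul_one_sub hp.isIdempotentElem
      (IsStrictlyPositive.isUnit_cfcSqrt _ hpos) (IsStrictlyPositive.isUnit_cfcSqrt _ hpos')
      hcomm.cfcSqrt_right hcomm'.cfcSqrt_right]

end CStarAlgebra

theorem ContinuousLinearMap.range_eq_range_of_mul_eq_self {𝕜 M : Type*} [Semiring 𝕜]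
    [TopologicalSpace M] [AddCommMonoid M] [Module 𝕜 M] {R T Z : M →L[𝕜] M}
    (hRT : R * T = T) (hR : R = T * Z) : Set.range R = Set.range T := by
  apply Set.Subset.antisymm
  · rw [hR, mul_def, coe_comp]
    exact Set.range_comp_subset_range Z T
  · conv_lhs => rw [← hRT, mul_def, coe_comp]
    exact Set.range_comp_subset_range T R

section GraphProjection

variable {H : Type*} [NormedAddCommGroup H] [InnerProductSpace ℂ H] [CompleteSpace H]

theorem range_proj_add_angular {P X : H →L[ℂ] H} (hP : IsIdempotentElem P)
    (hX : IsAngularOperator P X) :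
    Set.range (P + X) = (fun u => u + X u) '' Set.range P := by
  have hXP : ∀ v, X (P v) = X v := DFunLike.congr_fun (angular_mul_proj_eq_self hP hX)
  rw [← Set.range_comp]
  congr 1
  ext v
  simp [hXP]

theorem HasGraphRange.eq_mul_ringInverse_mul_star {P X Q : H →L[ℂ] H}
    (hg : HasGraphRange P X Q) (hP : IsStarProjection P) (hX : IsAngularOperator P X)
    (hQ : IsStarProjection Q) :
    Q = (P + X) * Ring.inverse (1 + star X * X) * star (P + X) := by
  set T := P + X
  set K := 1 + star X * X
  have hTT : star T * T = K * P := by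
    rw [star_add, hP.isSelfAdjoint.star_eq, proj_add_star_angular_mul_proj_add_angular hP hX hX,
      add_mul, one_mul, mul_assoc, angular_mul_proj_eq_self hP.isIdempotentElem hX]
  have hTP : T * P = T := by
    rw [add_mul, hP.isIdempotentElem.eq, angular_mul_proj_eq_self hP.isIdempotentElem hX]
  have hRT : T * Ring.inverse K * star T * T = T := by
    rw [mul_assoc, hTT, mul_assoc,
      Ring.inverse_mul_cancel_left _ _ (isStrictlyPositive_one_add_star_mul_self X).isUnit, hTP]
  have hR : IsStarProjection (T * Ring.inverse K * star T) := by
    refine ⟨?_, (IsSelfAdjoint.of_nonneg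
      (isStrictlyPositive_one_add_star_mul_self X).nonneg).ringInverse.conjugate T⟩
    calc T * Ring.inverse K * star T * (T * Ring.inverse K * star T)
        = T * Ring.inverse K * star T * T * (Ring.inverse K * star T) := by simp only [mul_assoc]
      _ = T * Ring.inverse K * star T := by rw [hRT, mul_assoc]
  refine hQ.ext hR (SetLike.coe_injective ?_)
  simp only [LinearMap.coe_range, ContinuousLinearMap.coe_coe]
  rw [hg, ← range_proj_add_angular hP.isIdempotentElem hX,
    range_eq_range_of_mul_eq_self hRT (mul_assoc _ _ _)]

end GraphProjection

theorem four_projections_lemma_general {H : Type*} [NormedAddCommGroup H] [InnerProductSpace ℂ H]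
    [CompleteSpace H]
    (P Q₂ X₁ X₂ : H →L[ℂ] H)
    (hP : IsOrthogonalProjection P)
    (hQ₂ : IsOrthogonalProjection Q₂)
    (hX₁ : IsAngularOperator P X₁)
    (hX₂ : IsAngularOperator P X₂) (hX₂g : HasGraphRange P X₂ Q₂) :
    adjoint (angularUnitary P X₁) * Q₂ * angularUnitary P X₁ =
      Ring.inverse (CFC.sqrt (1 + adjoint X₁ * X₁ + X₁ * adjoint X₁)) *
        ((1 + adjoint X₁ * X₂ + X₂ - X₁) * P) *
        Ring.inverse (1 + adjoint X₂ * X₂) *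
        adjoint ((1 + adjoint X₁ * X₂ + X₂ - X₁) * P) *
        Ring.inverse (CFC.sqrt (1 + adjoint X₁ * X₁ + X₁ * adjoint X₁)) := by
  have hP' : IsStarProjection P := ⟨hP.2, hP.1⟩
  simp only [angularUnitary, ← star_eq_adjoint]
  have hA : IsSelfAdjoint (Ring.inverse (CFC.sqrt (1 + star X₁ * X₁ + X₁ * star X₁))) :=
    (IsSelfAdjoint.of_nonneg (CFC.sqrt_nonneg _)).ringInverse
  have key : star (P + X₂) * ((P + X₁) * Ring.inverse (CFC.sqrt (1 + star X₁ * X₁)) * P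
      + ((1 - P) - star X₁) * Ring.inverse (CFC.sqrt (1 + X₁ * star X₁)) * (1 - P)) =
      star ((1 + star X₁ * X₂ + X₂ - X₁) * P) *
        Ring.inverse (CFC.sqrt (1 + star X₁ * X₁ + X₁ * star X₁)) := by
    rw [star_add, hP'.isSelfAdjoint.star_eq,
      ringInverse_sqrt_one_add_star_angular_mul_self_add_mul_star_self hP' hX₁]
    exact proj_add_star_angular_mul_unitaryForm hP' hX₁ hX₂
      (commute_proj_one_add_star_angular_mul_self hP' hX₁).cfcSqrt_right.ringInverse_right
      (commute_proj_one_add_angular_mul_star_self hP' hX₁).cfcSqrt_right.ringInverse_right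
  rw [hX₂g.eq_mul_ringInverse_mul_star hP' hX₂ ⟨hQ₂.2, hQ₂.1⟩,
    star_mul_conj_mul_of_star_mul_eq key, star_mul, star_star, hA.star_eq]
  simp only [mul_assoc]

/-- **Four projections lemma.** If `‖P − Q₁‖ < 1` and `‖P − Q₂‖ < 1` with angular
operators `X₁, X₂` for `P` such that `Ran Qⱼ = G(Xⱼ)`, then
`Q := U₁* Q₂ U₁ = A^{-1/2} B C B* A^{-1/2}` with `A = I + X₁*X₁ + X₁X₁*`,
`B = (I + X₁*X₂ + X₂ − X₁) P` and `C = (I + X₂*X₂)⁻¹`. -/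
theorem four_projections_lemma {H : Type*} [NormedAddCommGroup H] [InnerProductSpace ℂ H]
    [CompleteSpace H] [TopologicalSpace.SeparableSpace H]
    (P Q₁ Q₂ X₁ X₂ : H →L[ℂ] H)
    (hP : IsOrthogonalProjection P) (hQ₁ : IsOrthogonalProjection Q₁)
    (hQ₂ : IsOrthogonalProjection Q₂)
    (hPQ₁ : ‖P - Q₁‖ < 1) (hPQ₂ : ‖P - Q₂‖ < 1)
    (hX₁ : IsAngularOperator P X₁) (hX₁g : HasGraphRange P X₁ Q₁)
    (hX₂ : IsAngularOperator P X₂) (hX₂g : HasGraphRange P X₂ Q₂) :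
    adjoint (angularUnitary P X₁) * Q₂ * angularUnitary P X₁ =
      Ring.inverse (CFC.sqrt (1 + adjoint X₁ * X₁ + X₁ * adjoint X₁)) *
        ((1 + adjoint X₁ * X₂ + X₂ - X₁) * P) *
        Ring.inverse (1 + adjoint X₂ * X₂) *
        adjoint ((1 + adjoint X₁ * X₂ + X₂ - X₁) * P) *
        Ring.inverse (CFC.sqrt (1 + adjoint X₁ * X₁ + X₁ * adjoint X₁)) :=
  four_projections_lemma_general P Q₂ X₁ X₂ hP hQ₂ hX₁ hX₂ hX₂g
end

section
/- Let γ : [a,b] → 𝒫 be a piecewise C¹-smooth path of orthogonal projections such that for every t ∈ [a,b] there is an angular operator X_t for γ(a) with Ran γ(t) = G(X_t). If J ⊂ [a,b] is an interval on which γ is C¹-smooth, then the map t ↦ X_t is C¹-smooth (in operator norm) on J; in particular, t ↦ X_t is a piecewise C¹-smooth path on [a,b]. -/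
open ContinuousLinearMap

/-- A map `γ` is a piecewise `C¹`-smooth path on `[a,b]` if there is a partition
`a = t₀ < … < t_n = b` such that `γ` is `C¹`-smooth on each `[t_j, t_{j+1}]`. -/
def PiecewiseC1On {E : Type*} [NormedAddCommGroup E] [NormedSpace ℝ E]
    (γ : ℝ → E) (a b : ℝ) : Prop :=
  ∃ (n : ℕ) (t : ℕ → ℝ), t 0 = a ∧ t n = b ∧ (∀ i < n, t i < t (i + 1)) ∧
    ∀ i < n, ContDiffOn ℝ 1 γ (Set.Icc (t i) (t (i + 1)))

/-!
Write `P = γ a`, `Q = γ t`, `Y = X t`. Since `Ran Q = Ran (P + Y)`, the projection `Q` fixes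
`P + Y`, and `P⊥ Q = Y Q` because every vector of the graph has the form `u + Y u`. From these
identities `P Q P + P⊥` is invertible with inverse `1 + Y* Y`, and `Y (P Q P + P⊥) = P⊥ Q P`.
Hence `X t = P⊥ γ(t) P (P γ(t) P + P⊥)⁻¹`, a composition of `γ` with a map that is smooth near
every such `γ t`, inversion being smooth on the units of a Banach algebra.
-/

noncomputable def angularOperatorOf {R : Type*} [Ring R] (P Q : R) : R :=
  (1 - P) * Q * P * Ring.inverse (P * Q * P + 1 - P)

section StarRing

variable {R : Type*} [Ring R] [StarRing R] {P Q Y : R}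

theorem compress_mul_one_add_star_mul_self_eq_one (hP : IsSelfAdjoint P)
    (hP₂ : IsIdempotentElem P) (hQ : IsSelfAdjoint Q) (hPY : P * Y = 0) (hYP : Y * P = Y)
    (hfix : Q * (P + Y) = P + Y) (hcompl : (1 - P) * Q = Y * Q) :
    (P * Q * P + 1 - P) * (1 + star Y * Y) = 1 := by
  have hPY' : P * star Y = star Y := by
    simpa only [star_mul, hP.star_eq] using congrArg star hYP
  have hQY : Q * star Y = Q * (1 - P) := by
    simpa only [star_mul, star_sub, star_one, hP.star_eq, hQ.star_eq] using
      (congrArg star hcompl).symm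
  have hPQY : P * Q * P + P * Q * Y = P := by
    have := congrArg (P * ·) hfix
    simp only [mul_add, ← mul_assoc, hP₂.eq, hPY, add_zero] at this
    exact this
  calc (P * Q * P + 1 - P) * (1 + star Y * Y)
      = P * Q * P + 1 - P + P * (Q * (P * star Y)) * Y + star Y * Y - P * star Y * Y := by
        noncomm_ring
    _ = P * Q * P + P * Q * Y + 1 - P - P * Q * (P * Y) := by
        rw [hPY', hQY]; noncomm_ring
    _ = 1 := by rw [hPQY, hPY]; noncomm_ring

theorem isUnit_compress_and_eq_angularOperatorOf (hP : IsSelfAdjoint P)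
    (hP₂ : IsIdempotentElem P) (hQ : IsSelfAdjoint Q) (hPY : P * Y = 0) (hYP : Y * P = Y)
    (hfix : Q * (P + Y) = P + Y) (hcompl : (1 - P) * Q = Y * Q) :
    IsUnit (P * Q * P + 1 - P) ∧ Y = angularOperatorOf P Q := by
  have hright := compress_mul_one_add_star_mul_self_eq_one hP hP₂ hQ hPY hYP hfix hcompl
  have hleft : (1 + star Y * Y) * (P * Q * P + 1 - P) = 1 := by
    simpa only [star_mul, star_add, star_sub, star_one, star_star, hP.star_eq, hQ.star_eq,
      mul_assoc, add_sub_right_comm] using congrArg star hright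
  have hunit : IsUnit (P * Q * P + 1 - P) := ⟨⟨_, _, hright, hleft⟩, rfl⟩
  refine ⟨hunit, ?_⟩
  calc Y = Y * (P * Q * P + 1 - P) * Ring.inverse (P * Q * P + 1 - P) := by
        rw [mul_assoc, Ring.mul_inverse_cancel _ hunit, mul_one]
    _ = angularOperatorOf P Q := by
        rw [angularOperatorOf, mul_sub, mul_add, mul_one, hYP, add_sub_cancel_right,
          ← mul_assoc, ← mul_assoc, hYP, ← hcompl]

end StarRing

theorem contDiffAt_angularOperatorOf {𝕜 R : Type*} [NontriviallyNormedField 𝕜] [NormedRing R]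
    [NormedAlgebra 𝕜 R] [HasSummableGeomSeries R] {n : WithTop ℕ∞} (P : R) {Q : R}
    (hQ : IsUnit (P * Q * P + 1 - P)) :
    ContDiffAt 𝕜 n (angularOperatorOf P) Q := by
  have hinv : ContDiffAt 𝕜 n Ring.inverse (P * Q * P + 1 - P) := by
    simpa only [IsUnit.unit_spec] using contDiffAt_ringInverse 𝕜 hQ.unit
  have hcompress : ContDiff 𝕜 n fun Q : R => P * Q * P + 1 - P := by fun_prop
  have hinv' : ContDiffAt 𝕜 n (Ring.inverse ∘ fun Q : R => P * Q * P + 1 - P) Q :=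
    hinv.comp Q hcompress.contDiffAt
  exact ((contDiff_const.mul contDiff_id).mul contDiff_const).contDiffAt.mul hinv'

section Hilbert

variable {H : Type*} [NormedAddCommGroup H] [InnerProductSpace ℂ H] [CompleteSpace H]
  {P Q Y : H →L[ℂ] H}

theorem IsAngularOperator.proj_mul_eq_zero (hP : IsIdempotentElem P)
    (hY : IsAngularOperator P Y) : P * Y = 0 := by
  rw [hY, ← mul_assoc, ← mul_assoc, mul_sub, mul_one, hP.eq, sub_self, zero_mul, zero_mul]

theorem IsAngularOperator.mul_proj (hP : IsIdempotentElem P) (hY : IsAngularOperator P Y) :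
    Y * P = Y := by
  rw [hY, mul_assoc, hP.eq]

theorem HasGraphRange.range_eq (hYP : Y * P = Y) (hR : HasGraphRange P Y Q) :
    Set.range Q = Set.range (P + Y) := by
  rw [hR, ← Set.range_comp]
  congr 1
  ext h
  exact congrArg (P h + ·) congr($hYP h)

theorem HasGraphRange.mul_add_eq (hQ : IsIdempotentElem Q) (hYP : Y * P = Y)
    (hR : HasGraphRange P Y Q) : Q * (P + Y) = P + Y := by
  ext h
  obtain ⟨w, hw⟩ : (P + Y) h ∈ Set.range Q := hR.range_eq hYP ▸ Set.mem_range_self h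
  rw [mul_apply_eq_comp, ← hw]
  exact congr($hQ.eq w)

theorem HasGraphRange.compl_mul_eq (hP : IsIdempotentElem P) (hPY : P * Y = 0)
    (hYP : Y * P = Y) (hR : HasGraphRange P Y Q) : (1 - P) * Q = Y * Q := by
  have hY₂ : Y * Y = 0 := by
    calc Y * Y = Y * P * Y := by rw [hYP]
      _ = 0 := by rw [mul_assoc, hPY, mul_zero]
  have hgraph : (1 - P) * (P + Y) = Y * (P + Y) := by
    rw [mul_add, mul_add, sub_mul, sub_mul, one_mul, one_mul, hP.eq, hPY, hYP, hY₂]; abel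
  ext h
  obtain ⟨w, hw⟩ : Q h ∈ Set.range (P + Y) := hR.range_eq hYP ▸ Set.mem_range_self h
  simp only [mul_apply_eq_comp, ← hw]
  exact congr($hgraph w)

theorem HasGraphRange.isUnit_and_eq_angularOperatorOf (hP : IsOrthogonalProjection P)
    (hQ : IsOrthogonalProjection Q) (hY : IsAngularOperator P Y) (hR : HasGraphRange P Y Q) :
    IsUnit (P * Q * P + 1 - P) ∧ Y = angularOperatorOf P Q :=
  have hPY := hY.proj_mul_eq_zero hP.2
  have hYP := hY.mul_proj hP.2
  isUnit_compress_and_eq_angularOperatorOf hP.1 hP.2 hQ.1 hPY hYP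
    (hR.mul_add_eq hQ.2 hYP) (hR.compl_mul_eq hP.2 hPY hYP)

end Hilbert

section Partition

variable {E F : Type*} [NormedAddCommGroup E] [NormedSpace ℝ E] [NormedAddCommGroup F]
  [NormedSpace ℝ F] {γ : ℝ → E} {a b : ℝ}

theorem Icc_subset_Icc_of_lt_succ {α : Type*} [Preorder α] {n : ℕ} {t : ℕ → α} (ht : ∀ i < n, t i < t (i + 1)) {i : ℕ}
    (hi : i < n) : Set.Icc (t i) (t (i + 1)) ⊆ Set.Icc (t 0) (t n) :=
  have hmono := (strictMonoOn_Iic_of_lt_succ ht).monotoneOn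
  Set.Icc_subset_Icc (hmono (Nat.zero_le n) hi.le (Nat.zero_le i)) (hmono hi (le_refl n) hi)

theorem PiecewiseC1On.of_contDiffOn_imp {X : ℝ → F} (hγ : PiecewiseC1On γ a b)
    (h : ∀ c d, Set.Icc c d ⊆ Set.Icc a b →
      ContDiffOn ℝ 1 γ (Set.Icc c d) → ContDiffOn ℝ 1 X (Set.Icc c d)) :
    PiecewiseC1On X a b := by
  obtain ⟨n, t, rfl, rfl, ht, hsmooth⟩ := hγ
  exact ⟨n, t, rfl, rfl, ht, fun i hi ↦ h _ _ (Icc_subset_Icc_of_lt_succ ht hi) (hsmooth i hi)⟩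

end Partition

theorem angular_operator_smooth_general {H : Type*} [NormedAddCommGroup H] [InnerProductSpace ℂ H]
    [CompleteSpace H]
    (a b : ℝ) (γ X : ℝ → (H →L[ℂ] H))
    (hproj : ∀ t ∈ Set.Icc a b, IsOrthogonalProjection (γ t))
    (hγ : PiecewiseC1On γ a b)
    (hX : ∀ t ∈ Set.Icc a b,
      IsAngularOperator (γ a) (X t) ∧ HasGraphRange (γ a) (X t) (γ t)) :
    (∀ J ⊆ Set.Icc a b, J.OrdConnected → ContDiffOn ℝ 1 γ J → ContDiffOn ℝ 1 X J) ∧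
      PiecewiseC1On X a b := by
  have hsmooth : ∀ J ⊆ Set.Icc a b, ContDiffOn ℝ 1 γ J → ContDiffOn ℝ 1 X J := by
    intro J hJ hγJ x hx
    have ha : a ∈ Set.Icc a b := ⟨le_rfl, (hJ hx).1.trans (hJ hx).2⟩
    have hformula : ∀ s ∈ J,
        IsUnit (γ a * γ s * γ a + 1 - γ a) ∧ X s = angularOperatorOf (γ a) (γ s) :=
      fun s hs ↦ (hX s (hJ hs)).2.isUnit_and_eq_angularOperatorOf (hproj a ha)
        (hproj s (hJ hs)) (hX s (hJ hs)).1
    exact ((contDiffAt_angularOperatorOf _ (hformula x hx).1).comp_contDiffWithinAt x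
      (hγJ x hx)).congr (fun s hs ↦ (hformula s hs).2) (hformula x hx).2
  exact ⟨fun J hJ _ ↦ hsmooth J hJ, hγ.of_contDiffOn_imp fun _ _ hsub ↦ hsmooth _ hsub⟩

/-- If `γ : [a,b] → 𝒫` is a piecewise `C¹`-smooth path of orthogonal
projections such that `Ran γ(t) = G(X_t)` for angular operators `X_t` for `γ(a)`, then
`t ↦ X_t` is `C¹`-smooth on every interval `J ⊆ [a,b]` on which `γ` is `C¹`-smooth; in
particular, `t ↦ X_t` is piecewise `C¹`-smooth on `[a,b]`. -/
theorem angular_operator_smooth {H : Type*} [NormedAddCommGroup H] [InnerProductSpace ℂ H]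
    [CompleteSpace H] [TopologicalSpace.SeparableSpace H]
    (a b : ℝ) (γ X : ℝ → (H →L[ℂ] H))
    (hproj : ∀ t ∈ Set.Icc a b, IsOrthogonalProjection (γ t))
    (hγ : PiecewiseC1On γ a b)
    (hX : ∀ t ∈ Set.Icc a b,
      IsAngularOperator (γ a) (X t) ∧ HasGraphRange (γ a) (X t) (γ t)) :
    (∀ J ⊆ Set.Icc a b, J.OrdConnected → ContDiffOn ℝ 1 γ J → ContDiffOn ℝ 1 X J) ∧
      PiecewiseC1On X a b :=
  angular_operator_smooth_general a b γ X hproj hγ hX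
end

section
/- Let γ : [a,b] → 𝒫 be a piecewise C¹-smooth path of orthogonal projections such that for every t ∈ [a,b] there is an angular operator X_t for γ(a) with Ran γ(t) = G(X_t). Then for every interval J ⊂ [a,b] on which γ is C¹-smooth and every t ∈ J, the estimate ‖(d/dt) X_t‖ ≤ (1 + ‖X_t‖²) · ‖γ'(t)‖ holds. -/
open ContinuousLinearMap

/-!
Write `P = γ a`, `Q = γ t` and `X = X_t`. The graph condition says exactly that `Q (P + X) = P + X`
and `(P + X) Q = Q`. Differentiating the first identity and multiplying it on the left by
`1 - P - X`, which annihilates `Q` and fixes every angular operator for `P`, gives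
`X' = (1 - P - X) Q' (P + X)`. By the C*-identity `‖P + X‖² = ‖P + X⋆X‖ ≤ 1 + ‖X‖²`, and
`1 - P - X` is the adjoint of `(1 - P) - X⋆`, an operator of the same shape for the projection
`1 - P`; so both outer factors have norm at most `√(1 + ‖X‖²)`.
-/

section Angular

variable {R : Type*} [Ring R] {P X Y Q Q' X' : R}

namespace IsIdempotentElem

lemma mul_angular (hP : IsIdempotentElem P) (hX : X = (1 - P) * X * P) : P * X = 0 := by
  rw [hX, ← mul_assoc, ← mul_assoc, hP.mul_one_sub_self, zero_mul, zero_mul]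

lemma angular_mul_self (hP : IsIdempotentElem P) (hX : X = (1 - P) * X * P) : X * P = X := by
  rw [hX, mul_assoc _ P P, hP.eq]

lemma angular_mul_angular (hP : IsIdempotentElem P) (hX : X = (1 - P) * X * P)
    (hY : Y = (1 - P) * Y * P) : X * Y = 0 := by
  rw [hX, mul_assoc, hP.mul_angular hY, mul_zero]

lemma angular_eq_of_graph_derivative (hP : IsIdempotentElem P) (hX : X = (1 - P) * X * P)
    (hX' : X' = (1 - P) * X' * P) (hQ : (P + X) * Q = Q)
    (hderiv : Q' * (P + X) + Q * X' = X') : X' = (1 - P - X) * Q' * (P + X) := by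
  have hfix : (1 - P - X) * X' = X' := by
    rw [sub_mul, sub_mul, one_mul, hP.mul_angular hX', hP.angular_mul_angular hX hX', sub_zero,
      sub_zero]
  have hkill : (1 - P - X) * Q = 0 := by rw [sub_sub, sub_mul, one_mul, hQ, sub_self]
  calc X' = (1 - P - X) * (Q' * (P + X) + Q * X') := by rw [hderiv, hfix]
    _ = (1 - P - X) * Q' * (P + X) := by
      rw [mul_add, ← mul_assoc, ← mul_assoc, hkill, zero_mul, add_zero]

end IsIdempotentElem

end Angular

section CStarRing

variable {A : Type*} [NormedRing A] [StarRing A] [CStarRing A] {P X : A}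

namespace IsStarProjection

lemma norm_add_angular_sq_le (hP : IsStarProjection P) (hX : X = (1 - P) * X * P) :
    ‖P + X‖ ^ 2 ≤ 1 + ‖X‖ ^ 2 := by
  have hPX : P * X = 0 := hP.isIdempotentElem.mul_angular hX
  have hXP : star X * P = 0 := by
    rw [← hP.isSelfAdjoint.star_eq, ← star_mul, hPX, star_zero]
  have hgram : star (P + X) * (P + X) = P + star X * X := by
    rw [star_add, hP.isSelfAdjoint.star_eq, add_mul, mul_add, mul_add, hP.isIdempotentElem.eq,
      hPX, hXP, add_zero, zero_add]
  calc ‖P + X‖ ^ 2 = ‖P + star X * X‖ := by rw [← hgram, CStarRing.norm_star_mul_self, sq]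
    _ ≤ ‖P‖ + ‖star X * X‖ := norm_add_le _ _
    _ ≤ 1 + ‖X‖ ^ 2 := by
      rw [CStarRing.norm_star_mul_self, ← sq]
      gcongr
      exact hP.norm_le

lemma norm_one_sub_sub_angular_sq_le (hP : IsStarProjection P) (hX : X = (1 - P) * X * P) :
    ‖1 - P - X‖ ^ 2 ≤ 1 + ‖X‖ ^ 2 := by
  have hXstar : -star X = (1 - (1 - P)) * -star X * (1 - P) := by
    conv_lhs => rw [hX]
    rw [sub_sub_cancel, star_mul, star_mul, hP.isSelfAdjoint.star_eq,
      hP.one_sub.isSelfAdjoint.star_eq, mul_neg, neg_mul, mul_assoc]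
  have hstar : star (1 - P - X) = (1 - P) + -star X := by
    rw [star_sub, star_sub, star_one, hP.isSelfAdjoint.star_eq, sub_eq_add_neg]
  have := hP.one_sub.norm_add_angular_sq_le hXstar
  rwa [norm_neg, norm_star, ← hstar, norm_star] at this

lemma norm_sandwich_le (hP : IsStarProjection P) (hX : X = (1 - P) * X * P) (B : A) :
    ‖(1 - P - X) * B * (P + X)‖ ≤ (1 + ‖X‖ ^ 2) * ‖B‖ := by
  have hleft := hP.norm_one_sub_sub_angular_sq_le hX
  have hright := hP.norm_add_angular_sq_le hX
  have hprod : ‖1 - P - X‖ * ‖P + X‖ ≤ 1 + ‖X‖ ^ 2 := by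
    nlinarith [sq_nonneg (‖1 - P - X‖ - ‖P + X‖)]
  calc ‖(1 - P - X) * B * (P + X)‖ ≤ ‖1 - P - X‖ * ‖B‖ * ‖P + X‖ := norm_mul₃_le
    _ = ‖1 - P - X‖ * ‖P + X‖ * ‖B‖ := by ring
    _ ≤ (1 + ‖X‖ ^ 2) * ‖B‖ := by gcongr

end IsStarProjection

end CStarRing

section GraphRange

variable {H : Type*} [NormedAddCommGroup H] [InnerProductSpace ℂ H] [CompleteSpace H]
  {P X Q : H →L[ℂ] H}

namespace HasGraphRange

lemma mul_add_eq_s3 (h : HasGraphRange P X Q) (hQ : IsIdempotentElem Q)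
    (hP : IsIdempotentElem P) (hX : IsAngularOperator P X) : Q * (P + X) = P + X := by
  ext u
  obtain ⟨w, hw⟩ : (P + X) u ∈ Set.range Q := by
    rw [h]
    refine ⟨P u, ⟨u, rfl⟩, ?_⟩
    change P u + X (P u) = P u + X u
    rw [← mul_apply_eq_comp, hP.angular_mul_self hX]
  rw [mul_apply_eq_comp, ← hw, ← mul_apply_eq_comp, hQ.eq]

lemma add_mul_eq (h : HasGraphRange P X Q) (hP : IsIdempotentElem P)
    (hX : IsAngularOperator P X) : (P + X) * Q = Q := by
  ext u
  obtain ⟨v, ⟨w, rfl⟩, hv⟩ : Q u ∈ (fun u => u + X u) '' Set.range P := h ▸ ⟨u, rfl⟩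
  have hPP : P (P w) = P w := by rw [← mul_apply_eq_comp, hP.eq]
  have hPX : P (X (P w)) = 0 := by rw [← mul_apply_eq_comp, hP.mul_angular hX, zero_apply]
  have hXX : X (X (P w)) = 0 := by
    rw [← mul_apply_eq_comp, hP.angular_mul_angular hX hX, zero_apply]
  rw [mul_apply_eq_comp, ← hv, add_apply, map_add, map_add, hPP, hPX, hXX, add_zero, add_zero]

end HasGraphRange

end GraphRange

section Deriv

variable {A : Type*} [NormedRing A] [NormedAlgebra ℝ A] {f g : ℝ → A} {f' g' : A}
  {J : Set ℝ} {t : ℝ}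

lemma HasDerivWithinAt.eq_mul_mul_of_eqOn {c d : A} (hf : HasDerivWithinAt f f' J t)
    (hJ : UniqueDiffWithinAt ℝ J t) (ht : t ∈ J) (h : ∀ s ∈ J, f s = c * f s * d) :
    f' = c * f' * d :=
  hJ.eq_deriv _ hf (((hf.const_mul c).mul_const d).congr h (h t ht))

lemma HasDerivWithinAt.mul_add_mul_eq_of_eqOn (hf : HasDerivWithinAt f f' J t)
    (hg : HasDerivWithinAt g g' J t) (hJ : UniqueDiffWithinAt ℝ J t) (ht : t ∈ J)
    (h : ∀ s ∈ J, f s * g s = g s) : f' * g t + f t * g' = g' :=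
  hJ.eq_deriv _ ((hf.mul hg).congr (fun s hs => (h s hs).symm) (h t ht).symm) hg

end Deriv

theorem angular_operator_derivative_bound_general {H : Type*} [NormedAddCommGroup H]
    [InnerProductSpace ℂ H] [CompleteSpace H]
    (a b : ℝ) (γ X : ℝ → (H →L[ℂ] H))
    (hproj : ∀ t ∈ Set.Icc a b, IsOrthogonalProjection (γ t))
    (hX : ∀ t ∈ Set.Icc a b,
      IsAngularOperator (γ a) (X t) ∧ HasGraphRange (γ a) (X t) (γ t)) :
    ∀ J ⊆ Set.Icc a b, J.OrdConnected → ContDiffOn ℝ 1 γ J →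
      ∀ t ∈ J, ‖derivWithin X J t‖ ≤ (1 + ‖X t‖ ^ 2) * ‖derivWithin γ J t‖ := by
  intro J hJ _ hγ t ht
  by_cases hU : UniqueDiffWithinAt ℝ J t
  swap
  · rw [derivWithin_zero_of_not_uniqueDiffWithinAt hU, norm_zero]
    positivity
  by_cases hXdiff : DifferentiableWithinAt ℝ X J t
  swap
  · rw [derivWithin_zero_of_not_differentiableWithinAt hXdiff, norm_zero]
    positivity
  have ha : a ∈ Set.Icc a b := Set.left_mem_Icc.2 ((hJ ht).1.trans (hJ ht).2)
  have hP : IsStarProjection (γ a) := ⟨(hproj a ha).2, (hproj a ha).1⟩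
  obtain ⟨hXt, hgraph⟩ := hX t (hJ ht)
  have hXd := hXdiff.hasDerivWithinAt
  have hγd := ((hγ.differentiableOn one_ne_zero) t ht).hasDerivWithinAt
  have hX' := hXd.eq_mul_mul_of_eqOn hU ht fun s hs => (hX s (hJ hs)).1
  have hderiv := hγd.mul_add_mul_eq_of_eqOn (hXd.const_add (γ a)) hU ht fun s hs =>
    (hX s (hJ hs)).2.mul_add_eq_s3 (hproj s (hJ hs)).2 hP.isIdempotentElem (hX s (hJ hs)).1
  rw [hP.isIdempotentElem.angular_eq_of_graph_derivative hXt hX'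
    (hgraph.add_mul_eq hP.isIdempotentElem hXt) hderiv]
  exact hP.norm_sandwich_le hXt _

/-- If `γ : [a,b] → 𝒫` is a piecewise `C¹`-smooth path of orthogonal
projections with `Ran γ(t) = G(X_t)` for angular operators `X_t` for `γ(a)`, then on every
interval `J ⊆ [a,b]` on which `γ` is `C¹`-smooth one has
`‖(d/dt) X_t‖ ≤ (1 + ‖X_t‖²)·‖γ'(t)‖` for all `t ∈ J`. -/
theorem angular_operator_derivative_bound {H : Type*} [NormedAddCommGroup H]
    [InnerProductSpace ℂ H] [CompleteSpace H] [TopologicalSpace.SeparableSpace H]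
    (a b : ℝ) (γ X : ℝ → (H →L[ℂ] H))
    (hproj : ∀ t ∈ Set.Icc a b, IsOrthogonalProjection (γ t))
    (hγ : PiecewiseC1On γ a b)
    (hX : ∀ t ∈ Set.Icc a b,
      IsAngularOperator (γ a) (X t) ∧ HasGraphRange (γ a) (X t) (γ t)) :
    ∀ J ⊆ Set.Icc a b, J.OrdConnected → ContDiffOn ℝ 1 γ J →
      ∀ t ∈ J, ‖derivWithin X J t‖ ≤ (1 + ‖X t‖ ^ 2) * ‖derivWithin γ J t‖ :=
  angular_operator_derivative_bound_general a b γ X hproj hX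
end

section
/- (Arcsine Law for continuous paths) Let γ : [a,b] → 𝒫 be a continuous path of orthogonal projections. Then arcsin(‖γ(b) − γ(a)‖) ≤ l(γ). -/
open ContinuousLinearMap

/-!
For unit `x ∈ range P`, the angle between `x` and `range R` is at most the angle from `x` to
`Q x` plus the angle from `Q x` to `R (Q x)`, and these are at most `arcsin ‖P - Q‖` and
`arcsin ‖Q - R‖`. Since `‖P - R‖` is controlled by the sine of such angles on `range R` and
(passing to complements) on `ker R`, `arcsin ‖P - Q‖` satisfies the triangle inequality on
projections. As `arcsin t ≤ c t` for small `t ≥ 0` and any `c > 1`, chaining this inequality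
along a fine partition of `[a, b]` gives `arcsin ‖γ b - γ a‖ ≤ c · l(γ)`.
-/

open Real InnerProductGeometry Set Filter Topology
open scoped InnerProductSpace ENNReal

-- angles in `H` are those of the real inner product `re ⟪x, y⟫_ℂ`
attribute [local instance] InnerProductSpace.complexToReal

namespace IsOrthogonalProjection

variable {H : Type*} [NormedAddCommGroup H] [InnerProductSpace ℂ H] [CompleteSpace H]
  {P Q R : H →L[ℂ] H}

lemma apply_apply (hP : IsOrthogonalProjection P) (x : H) : P (P x) = P x :=
  congr($(hP.2) x)

lemma one_sub (hP : IsOrthogonalProjection P) : IsOrthogonalProjection (1 - P) :=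
  ⟨(IsSelfAdjoint.one _).sub hP.1, IsIdempotentElem.one_sub hP.2⟩

lemma real_inner_apply_left (hP : IsOrthogonalProjection P) (x y : H) :
    ⟪P x, y⟫_ℝ = ⟪x, P y⟫_ℝ :=
  congrArg RCLike.re (hP.1.isSymmetric x y)

lemma real_inner_apply_sub_apply (hP : IsOrthogonalProjection P) (x y : H) :
    ⟪P x, y - P y⟫_ℝ = 0 := by
  rw [hP.real_inner_apply_left, map_sub, hP.apply_apply, sub_self, inner_zero_right]

lemma norm_apply_sq_add_norm_sub_apply_sq (hP : IsOrthogonalProjection P) (x : H) :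
    ‖P x‖ ^ 2 + ‖x - P x‖ ^ 2 = ‖x‖ ^ 2 := by
  simpa only [sq, add_sub_cancel] using
    (norm_add_sq_eq_norm_sq_add_norm_sq_real (hP.real_inner_apply_sub_apply x x)).symm

lemma angle_apply_le_pi_div_two (hP : IsOrthogonalProjection P) (x : H) :
    angle x (P x) ≤ π / 2 := by
  simpa only [angle_comm, add_sub_cancel] using
    angle_add_le_pi_div_two_of_inner_eq_zero (hP.real_inner_apply_sub_apply x x)

lemma sin_angle_apply_mul_norm (hP : IsOrthogonalProjection P) (x : H) :
    sin (angle x (P x)) * ‖x‖ = ‖x - P x‖ := by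
  simpa only [angle_comm, add_sub_cancel] using
    sin_angle_add_mul_norm_of_inner_eq_zero (hP.real_inner_apply_sub_apply x x)

lemma cos_angle_apply_mul_norm (hP : IsOrthogonalProjection P) (x : H) :
    cos (angle x (P x)) * ‖x‖ = ‖P x‖ := by
  simpa only [angle_comm, add_sub_cancel] using
    cos_angle_add_mul_norm_of_inner_eq_zero (hP.real_inner_apply_sub_apply x x)

lemma angle_apply_le_angle (hP : IsOrthogonalProjection P) (x : H) {w : H} (hw : P w = w) :
    angle x (P x) ≤ angle x w := by
  rcases eq_or_ne x 0 with rfl | hx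
  · simp
  rcases eq_or_ne w 0 with rfl | hw0
  · simpa using hP.angle_apply_le_pi_div_two x
  have hcos : cos (angle x w) ≤ cos (angle x (P x)) := by
    have hxw : 0 < ‖x‖ * ‖w‖ := by positivity
    refine le_of_mul_le_mul_right ?_ hxw
    calc cos (angle x w) * (‖x‖ * ‖w‖) = ⟪P x, w⟫_ℝ := by
          rw [cos_angle_mul_norm_mul_norm, ← hw, ← hP.real_inner_apply_left, hw]
      _ ≤ ‖P x‖ * ‖w‖ := real_inner_le_norm _ _
      _ = cos (angle x (P x)) * (‖x‖ * ‖w‖) := by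
          rw [← mul_assoc, hP.cos_angle_apply_mul_norm]
  rw [← arccos_cos (angle_nonneg x w) (angle_le_pi x w),
    ← arccos_cos (angle_nonneg x (P x)) (angle_le_pi x (P x))]
  exact arccos_le_arccos hcos

lemma angle_apply_le_arcsin (hQ : IsOrthogonalProjection Q) {x : H} (hx : P x = x)
    (hx0 : x ≠ 0) : angle x (Q x) ≤ arcsin ‖P - Q‖ := by
  have hsin : sin (angle x (Q x)) ≤ ‖P - Q‖ := by
    refine le_of_mul_le_mul_right ?_ (norm_pos_iff.2 hx0)
    calc sin (angle x (Q x)) * ‖x‖ = ‖(P - Q) x‖ := by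
          rw [hQ.sin_angle_apply_mul_norm, sub_apply, hx]
      _ ≤ ‖P - Q‖ * ‖x‖ := le_opNorm _ _
  calc angle x (Q x) = arcsin (sin (angle x (Q x))) :=
        (arcsin_sin (by linarith [angle_nonneg x (Q x), pi_pos])
          (hQ.angle_apply_le_pi_div_two x)).symm
    _ ≤ arcsin ‖P - Q‖ := monotone_arcsin hsin

lemma angle_apply_le_arcsin_add_arcsin (hQ : IsOrthogonalProjection Q)
    (hR : IsOrthogonalProjection R) {x : H} (hx : P x = x) (hx0 : x ≠ 0) :
    angle x (R x) ≤ arcsin ‖P - Q‖ + arcsin ‖Q - R‖ := by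
  have hPQ := hQ.angle_apply_le_arcsin hx hx0
  rcases eq_or_ne (Q x) 0 with hQx | hQx
  · rw [hQx, angle_zero_right] at hPQ
    linarith [hR.angle_apply_le_pi_div_two x, arcsin_nonneg.2 (norm_nonneg (Q - R))]
  calc angle x (R x) ≤ angle x (R (Q x)) := hR.angle_apply_le_angle x (hR.apply_apply _)
    _ ≤ angle x (Q x) + angle (Q x) (R (Q x)) := angle_le_angle_add_angle _ _ _
    _ ≤ arcsin ‖P - Q‖ + arcsin ‖Q - R‖ :=
        add_le_add hPQ (hR.angle_apply_le_arcsin (hQ.apply_apply x) hQx)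

lemma norm_sub_apply_le_sin_mul (hQ : IsOrthogonalProjection Q)
    (hR : IsOrthogonalProjection R) {θ : ℝ} (hθ : arcsin ‖P - Q‖ + arcsin ‖Q - R‖ ≤ θ)
    (hθ' : θ ≤ π / 2) {x : H} (hx : P x = x) :
    ‖x - R x‖ ≤ sin θ * ‖x‖ := by
  rcases eq_or_ne x 0 with rfl | hx0
  · simp
  rw [← hR.sin_angle_apply_mul_norm]
  refine mul_le_mul_of_nonneg_right (sin_le_sin_of_le_of_le_pi_div_two ?_ hθ' ?_) (norm_nonneg x)
  · linarith [angle_nonneg x (R x), pi_pos]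
  · exact (hQ.angle_apply_le_arcsin_add_arcsin hR hx hx0).trans hθ

lemma norm_sub_le_of_forall_norm_le (hP : IsOrthogonalProjection P) (hR : IsOrthogonalProjection R)
    {c : ℝ} (hc : 0 ≤ c) (h₁ : ∀ x, ‖P (x - R x)‖ ≤ c * ‖x - R x‖)
    (h₂ : ∀ x, ‖R x - P (R x)‖ ≤ c * ‖R x‖) : ‖P - R‖ ≤ c := by
  refine opNorm_le_bound _ hc fun x => ?_
  have hsplit : (P - R) x = P (x - R x) + -(R x - P (R x)) := by
    simp only [sub_apply, map_sub]; abel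
  have horth : ⟪P (x - R x), -(R x - P (R x))⟫_ℝ = 0 := by
    rw [inner_neg_right, hP.real_inner_apply_sub_apply, neg_zero]
  refine le_of_sq_le_sq ?_ (by positivity)
  have h₁x := pow_le_pow_left₀ (norm_nonneg _) (h₁ x) 2
  have h₂x := pow_le_pow_left₀ (norm_nonneg _) (h₂ x) 2
  have hpyth := hR.norm_apply_sq_add_norm_sub_apply_sq x
  rw [hsplit, norm_add_sq_real, horth, norm_neg, mul_pow, ← hpyth]
  rw [mul_pow] at h₁x h₂x
  linarith

theorem arcsin_norm_sub_le_add (hP : IsOrthogonalProjection P) (hQ : IsOrthogonalProjection Q)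
    (hR : IsOrthogonalProjection R) :
    arcsin ‖P - R‖ ≤ arcsin ‖P - Q‖ + arcsin ‖Q - R‖ := by
  set θ := arcsin ‖P - Q‖ + arcsin ‖Q - R‖
  rcases le_or_gt (π / 2) θ with hθ | hθ
  · exact (arcsin_le_pi_div_two _).trans hθ
  have hθ0 : 0 ≤ θ :=
    add_nonneg (arcsin_nonneg.2 (norm_nonneg _)) (arcsin_nonneg.2 (norm_nonneg _))
  have hPR : ‖P - R‖ ≤ sin θ := by
    refine hP.norm_sub_le_of_forall_norm_le hR (sin_nonneg_of_nonneg_of_le_pi hθ0 (by linarith))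
      (fun x => ?_) (fun x => ?_)
    -- the same estimate for the complements `1 - R`, `1 - Q`, `1 - P` controls `P` on `ker R`
    · have hx : (1 - R) (x - R x) = x - R x := by simp [hR.apply_apply]
      have hθ' : arcsin ‖(1 - R) - (1 - Q)‖ + arcsin ‖(1 - Q) - (1 - P)‖ ≤ θ := by
        rw [sub_sub_sub_cancel_left, sub_sub_sub_cancel_left, add_comm]
      simpa using hQ.one_sub.norm_sub_apply_le_sin_mul hP.one_sub hθ' hθ.le hx
    · refine hQ.norm_sub_apply_le_sin_mul hP ?_ hθ.le (hR.apply_apply x)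
      rw [norm_sub_rev Q P, norm_sub_rev R Q, add_comm]
  calc arcsin ‖P - R‖ ≤ arcsin (sin θ) := monotone_arcsin hPR
    _ = θ := arcsin_sin (by linarith) hθ.le

end IsOrthogonalProjection

lemma eventually_arcsin_le_mul {c : ℝ} (hc : 1 < c) : ∀ᶠ x in 𝓝[≥] 0, arcsin x ≤ c * x := by
  have hderiv : Tendsto (slope arcsin 0) (𝓝[≠] 0) (𝓝 1) := by
    simpa using
      hasDerivAt_iff_tendsto_slope.1 (hasDerivAt_arcsin (x := 0) (by norm_num) (by norm_num))
  have hpos : ∀ᶠ x in 𝓝[>] 0, arcsin x ≤ c * x := by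
    filter_upwards [nhdsWithin_mono _ (fun x hx => ne_of_gt hx)
      (hderiv.eventually (gt_mem_nhds hc)), self_mem_nhdsWithin] with x hslope hx
    rw [slope_def_field, sub_zero, arcsin_zero, sub_zero, div_lt_iff₀ hx] at hslope
    exact hslope.le
  rw [← Ioi_insert]
  exact mem_nhdsWithin_insert.2 ⟨by simp, hpos⟩

theorem ContinuousOn.le_mul_eVariationOn_of_locally_le {E : Type*} [PseudoMetricSpace E]
    {f : ℝ → E} {a b : ℝ} (hab : a ≤ b) (hf : ContinuousOn f (Icc a b)) {S : Set E}
    (hfS : MapsTo f (Icc a b) S) {ρ : E → E → ℝ≥0∞}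
    (hρ : ∀ x ∈ S, ∀ y ∈ S, ∀ z ∈ S, ρ x z ≤ ρ x y + ρ y z) {c : ℝ≥0∞} {r : ℝ} (hr : 0 < r)
    (hloc : ∀ x ∈ S, ∀ y ∈ S, dist x y < r → ρ x y ≤ c * edist x y) :
    ρ (f a) (f b) ≤ c * eVariationOn f (Icc a b) := by
  obtain ⟨δ, hδ, hfδ⟩ :=
    Metric.uniformContinuousOn_iff.1 (isCompact_Icc.uniformContinuousOn_of_continuous hf) r hr
  have ha : a ∈ Icc a b := left_mem_Icc.2 hab
  have key : ∀ n : ℕ, ∀ t ∈ Icc a b, t ≤ a + n * (δ / 2) →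
      ρ (f a) (f t) ≤ c * eVariationOn f (Icc a t) := by
    intro n
    induction n with
    | zero =>
      intro t ht hta
      obtain rfl : t = a := le_antisymm (by simpa using hta) ht.1
      exact (hloc _ (hfS ha) _ (hfS ha) (by simpa using hr)).trans (by simp)
    | succ n ih =>
      intro t ht htn
      set m := max a (t - δ / 2)
      have hm : m ∈ Icc a b := ⟨le_max_left _ _, max_le hab (by linarith [ht.2, hδ])⟩
      have hmt : m ≤ t := max_le ht.1 (by linarith)
      have hdist : dist (f m) (f t) < r := hfδ m hm t ht (by
        rw [Real.dist_eq, abs_of_nonpos (by linarith)]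
        linarith [le_max_right a (t - δ / 2)])
      calc ρ (f a) (f t) ≤ ρ (f a) (f m) + ρ (f m) (f t) := hρ _ (hfS ha) _ (hfS hm) _ (hfS ht)
        _ ≤ c * eVariationOn f (Icc a m) + c * eVariationOn f (Icc m t) := by
          gcongr
          · exact ih m hm (max_le (le_add_of_nonneg_right (by positivity))
              (by push_cast at htn; linarith))
          · exact (hloc _ (hfS hm) _ (hfS ht) hdist).trans
              (by gcongr; exact eVariationOn.edist_le f (left_mem_Icc.2 hmt) (right_mem_Icc.2 hmt))
        _ = c * eVariationOn f (Icc a t) := by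
          rw [← mul_add]
          simpa using
            congrArg (c * ·) (eVariationOn.Icc_add_Icc f (s := univ) hm.1 hmt (mem_univ m))
  obtain ⟨n, hn⟩ := exists_nat_ge ((b - a) / (δ / 2))
  exact key n b (right_mem_Icc.2 hab) (by
    rw [div_le_iff₀ (by positivity)] at hn
    linarith)

lemma ENNReal.le_of_forall_one_lt_le_ofReal_mul {x y : ℝ≥0∞}
    (h : ∀ c : ℝ, 1 < c → x ≤ ENNReal.ofReal c * y) : x ≤ y := by
  have hlim : Tendsto (fun c : ℝ => ENNReal.ofReal c * y) (𝓝[>] 1) (𝓝 y) := by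
    simpa using ENNReal.Tendsto.mul_const (ENNReal.tendsto_ofReal
      (tendsto_nhdsWithin_of_tendsto_nhds (tendsto_id (x := 𝓝 (1 : ℝ))))) (Or.inl (by simp))
  exact ge_of_tendsto hlim (eventually_nhdsWithin_of_forall h)

theorem arcsine_law_continuous_general {H : Type*} [NormedAddCommGroup H] [InnerProductSpace ℂ H]
    [CompleteSpace H]
    (a b : ℝ) (hab : a ≤ b) (γ : ℝ → (H →L[ℂ] H))
    (hproj : ∀ t ∈ Set.Icc a b, IsOrthogonalProjection (γ t))
    (hcont : ContinuousOn γ (Set.Icc a b)) :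
    ENNReal.ofReal (Real.arcsin ‖γ b - γ a‖) ≤ eVariationOn γ (Set.Icc a b) := by
  refine ENNReal.le_of_forall_one_lt_le_ofReal_mul fun c hc => ?_
  obtain ⟨r, hr, hrc⟩ := mem_nhdsGE_iff_exists_Ico_subset.1 (eventually_arcsin_le_mul hc)
  rw [norm_sub_rev]
  refine hcont.le_mul_eVariationOn_of_locally_le hab (S := {P | IsOrthogonalProjection P})
    (ρ := fun P Q => ENNReal.ofReal (arcsin ‖P - Q‖)) hproj ?_ hr ?_
  · intro P hP Q hQ R hR
    rw [← ENNReal.ofReal_add (arcsin_nonneg.2 (norm_nonneg _)) (arcsin_nonneg.2 (norm_nonneg _))]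
    exact ENNReal.ofReal_le_ofReal (hP.arcsin_norm_sub_le_add hQ hR)
  · intro P _ Q _ hPQ
    rw [dist_eq_norm] at hPQ
    rw [edist_dist, dist_eq_norm, ← ENNReal.ofReal_mul (by linarith)]
    exact ENNReal.ofReal_le_ofReal (hrc ⟨norm_nonneg _, hPQ⟩)

/-- **Arcsine Law for continuous paths.** For a continuous path
`γ : [a,b] → 𝒫` of orthogonal projections, `arcsin ‖γ(b) − γ(a)‖ ≤ l(γ)`, where the length
`l(γ)` is the total variation of `γ` on `[a,b]`. -/
theorem arcsine_law_continuous {H : Type*} [NormedAddCommGroup H] [InnerProductSpace ℂ H]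
    [CompleteSpace H] [TopologicalSpace.SeparableSpace H]
    (a b : ℝ) (hab : a ≤ b) (γ : ℝ → (H →L[ℂ] H))
    (hproj : ∀ t ∈ Set.Icc a b, IsOrthogonalProjection (γ t))
    (hcont : ContinuousOn γ (Set.Icc a b)) :
    ENNReal.ofReal (Real.arcsin ‖γ b - γ a‖) ≤ eVariationOn γ (Set.Icc a b) :=
  arcsine_law_continuous_general a b hab γ hproj hcont
end

section
/- For all real numbers d > 0 and v with 0 < v < d/2, the inequality sin( (π/4) · log( d / (d − 2v) ) ) < (π/2) · v / (d − v) holds. -/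
/-!
Put `u = v / (d - v) ∈ (0, 1)`. Then `d / (d - 2v) = (1 + u) / (1 - u)`, so the left-hand side is
`sin (π/2 · s)` with `s = artanh u`, while the right-hand side is `π/2 · tanh s`. If `u ≥ 2/3` the
inequality is trivial, as `sin ≤ 1 < π/3`. Otherwise `u < 2/3 ≤ tanh 1` forces `0 < s ≤ 1`, and there
the Taylor bounds `sin y ≤ y - y³/6 + y⁵/120` and `tanh s ≥ s - s³/3` already separate the two sides.
-/

open Real

lemma le_of_hasDerivAt_le {f g f' g' : ℝ → ℝ} {a x : ℝ}
    (hf : ∀ y, HasDerivAt f (f' y) y) (hg : ∀ y, HasDerivAt g (g' y) y)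
    (ha : f a ≤ g a) (hfg : ∀ y, a ≤ y → f' y ≤ g' y) (hx : a ≤ x) : f x ≤ g x :=
  image_le_of_deriv_right_le_deriv_boundary
    (fun y _ ↦ (hf y).continuousAt.continuousWithinAt) (fun y _ ↦ (hf y).hasDerivWithinAt) ha
    (fun y _ ↦ (hg y).continuousAt.continuousWithinAt) (fun y _ ↦ (hg y).hasDerivWithinAt)
    (fun y hy ↦ hfg y hy.1) ⟨hx, le_rfl⟩

namespace Real

lemma cos_le_one_sub_sq_div_two_add {x : ℝ} (hx : 0 ≤ x) :
    cos x ≤ 1 - x ^ 2 / 2 + x ^ 4 / 24 := by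
  refine le_of_hasDerivAt_le (g := fun y ↦ 1 - y ^ 2 / 2 + y ^ 4 / 24)
    (f' := fun y ↦ -sin y) (g' := fun y ↦ -y + y ^ 3 / 6) hasDerivAt_cos (fun y ↦ ?_) (by simp)
    (fun y hy ↦ ?_) hx
  · exact ((((hasDerivAt_pow 2 y).div_const 2).const_sub 1).add
      ((hasDerivAt_pow 4 y).div_const 24)).congr_deriv (by norm_num; ring)
  · linarith [sin_ge_sub_cube hy]

lemma sin_le_sub_cube_div_six_add {x : ℝ} (hx : 0 ≤ x) :
    sin x ≤ x - x ^ 3 / 6 + x ^ 5 / 120 := by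
  refine le_of_hasDerivAt_le (g := fun y ↦ y - y ^ 3 / 6 + y ^ 5 / 120)
    (f' := cos) (g' := fun y ↦ 1 - y ^ 2 / 2 + y ^ 4 / 24) hasDerivAt_sin (fun y ↦ ?_) (by simp)
    (fun y hy ↦ cos_le_one_sub_sq_div_two_add hy) hx
  exact (((hasDerivAt_id y).sub ((hasDerivAt_pow 3 y).div_const 6)).add
    ((hasDerivAt_pow 5 y).div_const 120)).congr_deriv (by norm_num; ring)

lemma tanh_eq_exp_two_mul (x : ℝ) : tanh x = (exp (2 * x) - 1) / (exp (2 * x) + 1) := by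
  rw [tanh_eq, two_mul, exp_add, exp_neg]
  field_simp

lemma sub_cube_div_three_le_tanh {x : ℝ} (hx : 0 ≤ x) : x - x ^ 3 / 3 ≤ tanh x := by
  have hexp : 1 + 2 * x + (2 * x) ^ 2 / 2 + (2 * x) ^ 3 / 6 + (2 * x) ^ 4 / 24 ≤ exp (2 * x) := by
    have h := sum_le_exp_of_nonneg (by positivity : 0 ≤ 2 * x) 5
    simpa [Finset.sum_range_succ, Nat.factorial] using h
  -- `3 - 3x + x³ = (x - 1)²(x + 2) + 1`
  have hpos : 0 < 3 - 3 * x + x ^ 3 := by nlinarith [mul_nonneg (sq_nonneg (x - 1)) hx]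
  rw [tanh_eq_exp_two_mul, le_div_iff₀ (by positivity)]
  nlinarith [mul_le_mul_of_nonneg_right hexp hpos.le, pow_nonneg hx 6, pow_nonneg hx 7]

lemma sin_pi_div_two_mul_lt_pi_div_two_mul_sub_cube {x : ℝ} (hx₀ : 0 < x) (hx₁ : x ≤ 1) :
    sin (π / 2 * x) < π / 2 * (x - x ^ 3 / 3) := by
  have hsin := sin_le_sub_cube_div_six_add (by positivity : 0 ≤ π / 2 * x)
  have hπ : 0 < 80 * π ^ 2 - 640 - π ^ 4 := by
    have hlo : 9.85 < π ^ 2 := by nlinarith [pi_gt_d2]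
    have hhi : π ^ 2 < 16 := by nlinarith [pi_lt_d2, pi_pos]
    nlinarith [mul_pos (sub_pos.2 hlo) (sub_pos.2 hhi)]
  have hx2 : π ^ 4 * x ^ 2 ≤ π ^ 4 := by
    nlinarith [pow_pos pi_pos 4, mul_le_mul hx₁ hx₁ hx₀.le zero_le_one]
  -- the difference of the two sides is `π x³ (80π² - 640 - π⁴x²) / 3840`
  nlinarith [mul_pos (mul_pos pi_pos (pow_pos hx₀ 3)) hπ,
    mul_le_mul_of_nonneg_left hx2 (mul_pos pi_pos (pow_pos hx₀ 3)).le]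

lemma sin_pi_div_two_mul_artanh_lt {u : ℝ} (hu₀ : 0 < u) (hu₁ : u < 1) :
    sin (π / 2 * artanh u) < π / 2 * u := by
  rcases le_or_gt (2 / 3) u with hu | hu
  · have : π / 2 * (2 / 3) ≤ π / 2 * u := mul_le_mul_of_nonneg_left hu (by positivity)
    linarith [sin_le_one (π / 2 * artanh u), pi_gt_three]
  set s := artanh u
  have hs₀ : 0 < s := artanh_pos ⟨hu₀, hu₁⟩
  have hus : tanh s = u := tanh_artanh ⟨by linarith, hu₁⟩
  have htanh_one : 2 / 3 ≤ tanh 1 := by linarith [sub_cube_div_three_le_tanh zero_le_one]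
  have hs₁ : s ≤ 1 := by
    simpa only [artanh_tanh] using
      artanh_le_artanh (by linarith) (tanh_lt_one 1) (hu.le.trans htanh_one)
  calc sin (π / 2 * s) < π / 2 * (s - s ^ 3 / 3) :=
        sin_pi_div_two_mul_lt_pi_div_two_mul_sub_cube hs₀ hs₁
    _ ≤ π / 2 * u := by
        rw [← hus]
        exact mul_le_mul_of_nonneg_left (sub_cube_div_three_le_tanh hs₀.le) (by positivity)

end Real

theorem arcsine_new_bound_lt_old_bound_general (d v : ℝ) (hv : 0 < v)
    (hvd : v < d / 2) :
    Real.sin ((π / 4) * Real.log (d / (d - 2 * v))) < (π / 2) * v / (d - v) := by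
  have hdv : 0 < d - v := by linarith
  have hratio : (1 + v / (d - v)) / (1 - v / (d - v)) = d / (d - 2 * v) := by
    have : d - 2 * v ≠ 0 := by linarith
    field_simp
    ring
  set u := v / (d - v)
  have hu₀ : 0 < u := div_pos hv hdv
  have hu₁ : u < 1 := (div_lt_one hdv).2 (by linarith)
  have hlog : π / 4 * log (d / (d - 2 * v)) = π / 2 * artanh u := by
    rw [artanh_eq_half_log ⟨by linarith, hu₁.le⟩, hratio]
    ring
  rw [hlog, mul_div_assoc]
  exact sin_pi_div_two_mul_artanh_lt hu₀ hu₁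

/-- For all real `d > 0` and `0 < v < d/2`,
`sin((π/4)·log(d/(d−2v))) < (π/2)·v/(d−v)`. -/
theorem arcsine_new_bound_lt_old_bound (d v : ℝ) (hd : 0 < d) (hv : 0 < v)
    (hvd : v < d / 2) :
    Real.sin ((π / 4) * Real.log (d / (d - 2 * v))) < (π / 2) * v / (d - v) :=
  arcsine_new_bound_lt_old_bound_general d v hv hvd
end

section
/- For every real t with 0 < t < √3/2, the inequality sin( (π/2) ∫_0^t (2 − √(1 + 4τ²))^{−1} dτ ) < π t / (3 − √(1 + 4t²)) holds. -/
/-!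
Write `s = √(1 + 4τ²)`. The old bound is `(π/2) g(t)` with `g(t) = 2t / (3 - s(t))`, and
`g' = 2(3s - 1) / (s (3 - s)²)`. Comparing with the integrand `1 / (2 - s)`, the difference of
the cross-multiplied sides is `(s - 1)(4 - s - s²) ≥ 0` as long as `s ≤ 3/2`, i.e. `t² ≤ 5/16`.
There the argument of `sin` is at most `(π/2) g(t)`, and `sin x < x` gives the strict inequality.
For `t² > 5/16` the old bound already exceeds `1 ≥ sin`.
-/

open Real Set MeasureTheory

lemma sqrt_one_add_four_mul_sq_lt_two {τ : ℝ} (h : |τ| < √3 / 2) : √(1 + 4 * τ ^ 2) < 2 := by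
  have hτ : τ ^ 2 < 3 / 4 := by
    calc τ ^ 2 = |τ| ^ 2 := (sq_abs τ).symm
      _ < (√3 / 2) ^ 2 := pow_lt_pow_left₀ h (abs_nonneg τ) two_ne_zero
      _ = 3 / 4 := by rw [div_pow, sq_sqrt (by norm_num)]; norm_num
  rw [sqrt_lt' two_pos]
  linarith

lemma continuousOn_inv_two_sub_sqrt :
    ContinuousOn (fun τ : ℝ => (2 - √(1 + 4 * τ ^ 2))⁻¹) (Ioo (-(√3 / 2)) (√3 / 2)) := by
  refine ContinuousOn.inv₀ (by fun_prop) fun τ hτ => ?_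
  exact (sub_pos.2 (sqrt_one_add_four_mul_sq_lt_two (abs_lt.2 hτ))).ne'

lemma integrableOn_inv_two_sub_sqrt {t : ℝ} (ht : t < √3 / 2) :
    IntegrableOn (fun τ : ℝ => (2 - √(1 + 4 * τ ^ 2))⁻¹) (Icc 0 t) := by
  refine (continuousOn_inv_two_sub_sqrt.mono fun τ hτ => ⟨?_, hτ.2.trans_lt ht⟩).integrableOn_Icc
  have : 0 < √3 := by positivity
  linarith [hτ.1]

lemma integral_inv_two_sub_sqrt_pos {t : ℝ} (ht : 0 < t) (ht' : t < √3 / 2) :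
    0 < ∫ τ in (0 : ℝ)..t, (2 - √(1 + 4 * τ ^ 2))⁻¹ := by
  refine intervalIntegral.intervalIntegral_pos_of_pos_on
    ((intervalIntegrable_iff_integrableOn_Icc_of_le ht.le).2 (integrableOn_inv_two_sub_sqrt ht'))
    (fun τ hτ => ?_) ht
  have hτ' : |τ| < √3 / 2 := by rw [abs_of_pos hτ.1]; exact hτ.2.trans ht'
  exact inv_pos.2 (sub_pos.2 (sqrt_one_add_four_mul_sq_lt_two hτ'))

lemma hasDerivAt_two_mul_div_three_sub_sqrt {x : ℝ} (hx : √(1 + 4 * x ^ 2) ≠ 3) :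
    HasDerivAt (fun τ : ℝ => 2 * τ / (3 - √(1 + 4 * τ ^ 2)))
      (2 * (3 * √(1 + 4 * x ^ 2) - 1) / (√(1 + 4 * x ^ 2) * (3 - √(1 + 4 * x ^ 2)) ^ 2)) x := by
  have hpos : 0 < 1 + 4 * x ^ 2 := by positivity
  have hsqrt : HasDerivAt (fun τ : ℝ => √(1 + 4 * τ ^ 2))
      (4 * (2 * x) / (2 * √(1 + 4 * x ^ 2))) x := by
    simpa using (((hasDerivAt_pow 2 x).const_mul 4).const_add 1).sqrt hpos.ne'
  refine (((hasDerivAt_id' x).const_mul 2).fun_div (hsqrt.const_sub 3)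
    (sub_ne_zero.2 hx.symm)).congr_deriv ?_
  have hs2 : √(1 + 4 * x ^ 2) ^ 2 = 1 + 4 * x ^ 2 := sq_sqrt hpos.le
  field_simp
  linear_combination (-1) * hs2

lemma inv_two_sub_le {s : ℝ} (h1 : 1 ≤ s) (h2 : s ≤ 3 / 2) :
    (2 - s)⁻¹ ≤ 2 * (3 * s - 1) / (s * (3 - s) ^ 2) := by
  rw [inv_eq_one_div, div_le_div_iff₀ (by linarith) (by nlinarith)]
  nlinarith [mul_nonneg (sub_nonneg.2 h1) (by nlinarith : 0 ≤ 4 - s - s ^ 2)]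

lemma integral_inv_two_sub_sqrt_le {t : ℝ} (ht : 0 ≤ t) (ht' : t ^ 2 ≤ 5 / 16) :
    ∫ τ in (0 : ℝ)..t, (2 - √(1 + 4 * τ ^ 2))⁻¹ ≤ 2 * t / (3 - √(1 + 4 * t ^ 2)) := by
  have hs : ∀ τ ∈ Icc 0 t, 1 ≤ √(1 + 4 * τ ^ 2) ∧ √(1 + 4 * τ ^ 2) ≤ 3 / 2 := by
    intro τ hτ
    have : τ ^ 2 ≤ t ^ 2 := pow_le_pow_left₀ hτ.1 hτ.2 2
    exact ⟨one_le_sqrt.2 (by nlinarith), (sqrt_le_left (by norm_num)).2 (by nlinarith)⟩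
  have hderiv : ∀ τ ∈ Icc 0 t, HasDerivAt (fun τ : ℝ => 2 * τ / (3 - √(1 + 4 * τ ^ 2)))
      (2 * (3 * √(1 + 4 * τ ^ 2) - 1) / (√(1 + 4 * τ ^ 2) * (3 - √(1 + 4 * τ ^ 2)) ^ 2)) τ :=
    fun τ hτ => hasDerivAt_two_mul_div_three_sub_sqrt (by linarith [(hs τ hτ).2])
  have ht3 : t < √3 / 2 := by
    rw [lt_div_iff₀ two_pos, mul_comm]
    exact (lt_sqrt (by positivity)).2 (by nlinarith)
  simpa using intervalIntegral.integral_le_sub_of_hasDeriv_right_of_le ht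
    (fun τ hτ => (hderiv τ hτ).continuousAt.continuousWithinAt)
    (fun τ hτ => (hderiv τ (Ioo_subset_Icc_self hτ)).hasDerivWithinAt)
    (integrableOn_inv_two_sub_sqrt ht3)
    fun τ hτ => (hs τ (Ioo_subset_Icc_self hτ)).elim inv_two_sub_le

lemma one_lt_pi_mul_div_three_sub_sqrt {t : ℝ} (ht : 0 < t) (ht' : 5 / 16 < t ^ 2)
    (hs : √(1 + 4 * t ^ 2) < 3) : 1 < π * t / (3 - √(1 + 4 * t ^ 2)) := by
  rw [one_lt_div (sub_pos.2 hs)]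
  have hs' : 3 / 2 < √(1 + 4 * t ^ 2) := (lt_sqrt (by norm_num)).2 (by linarith)
  have ht2 : 1 / 2 < t := by nlinarith
  nlinarith [pi_gt_three]

/-- For every `0 < t < √3/2`,
`sin((π/2)·∫_0^t (2 − √(1+4τ²))⁻¹ dτ) < π t/(3 − √(1+4t²))`. -/
theorem offdiag_new_bound_lt_old_bound (t : ℝ) (ht : 0 < t)
    (ht' : t < Real.sqrt 3 / 2) :
    Real.sin ((π / 2) * ∫ τ in (0:ℝ)..t, (2 - Real.sqrt (1 + 4 * τ ^ 2))⁻¹)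
      < π * t / (3 - Real.sqrt (1 + 4 * t ^ 2)) := by
  set I := ∫ τ in (0:ℝ)..t, (2 - √(1 + 4 * τ ^ 2))⁻¹
  rcases le_or_gt (t ^ 2) (5 / 16) with hsmall | hlarge
  · have hI := integral_inv_two_sub_sqrt_pos ht ht'
    calc sin (π / 2 * I) < π / 2 * I := sin_lt (by positivity)
      _ ≤ π / 2 * (2 * t / (3 - √(1 + 4 * t ^ 2))) := by
        gcongr; exact integral_inv_two_sub_sqrt_le ht.le hsmall
      _ = π * t / (3 - √(1 + 4 * t ^ 2)) := by ring
  · have hs := sqrt_one_add_four_mul_sq_lt_two (by rwa [abs_of_pos ht])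
    exact (sin_le_one _).trans_lt (one_lt_pi_mul_div_three_sub_sqrt ht hlarge (by linarith))
end

section
/- Let H = L²((−1,1), ℂ), let P be the orthogonal projection onto the closed linear span of the even harmonics { x ↦ e^{2πikx} : k ∈ ℤ }, and let x̂ be the bounded self-adjoint multiplication operator (x̂ f)(x) = x·f(x). Then the commutator satisfies ‖2x̂P − P(2x̂)‖ = 1, i.e., ‖x̂P − Px̂‖ = 1/2. -/
open MeasureTheory ContinuousLinearMap
open scoped Real

/-- Lebesgue measure restricted to the interval `(-1, 1)`. -/
noncomputable def volIoo : Measure ℝ := volume.restrict (Set.Ioo (-1 : ℝ) 1)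

/-- The Hilbert space `L²((-1,1), ℂ)`. -/
noncomputable abbrev L2Ioo := Lp ℂ 2 volIoo

/-- The closed linear span of the even harmonics `x ↦ e^{2πikx}`, `k ∈ ℤ`,
in `L²((-1,1), ℂ)`. -/
noncomputable def evenHarmonics : Submodule ℂ L2Ioo :=
  (Submodule.span ℂ {g : L2Ioo | ∃ k : ℤ,
    (g : ℝ → ℂ) =ᵐ[volIoo]
      fun x => Complex.exp (((2 * π * (k : ℝ) * x : ℝ) : ℂ) * Complex.I)}).topologicalClosure

open Set Submodule

/-!
Let `τ` be translation by `1` modulo `2` on `(-1, 1)` and `S f = f ∘ τ`. Then `S` is a self-adjoint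
unitary involution acting on the Fourier basis `eₙ(x) = e^{iπnx}` by `S eₙ = (-1)ⁿ eₙ`, so the even
harmonics are its fixed space and `P = (1 + S) / 2`. Hence `x̂P - Px̂ = (x̂S - Sx̂) / 2`, and
`(x̂S - Sx̂) f (x) = (x - τ x) f (τ x)` with `|x - τ x| = 1`, so `x̂S - Sx̂` preserves norms and has
norm `1`.
-/

lemma IsSelfAdjoint.isStarProjection_inv_two_smul_one_add {𝕜 A : Type*} [Field 𝕜] [CharZero 𝕜]
    [StarRing 𝕜] [Ring A] [StarRing A] [Algebra 𝕜 A] [StarModule 𝕜 A] {s : A}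
    (hs : IsSelfAdjoint s) (hss : s * s = 1) : IsStarProjection ((2⁻¹ : 𝕜) • (1 + s)) where
  isIdempotentElem := by
    rw [IsIdempotentElem, smul_mul_smul_comm, mul_add, add_mul, add_mul, hss, one_mul, one_mul,
      mul_one]
    module
  isSelfAdjoint := IsSelfAdjoint.smul (by simp [IsSelfAdjoint]) ((IsSelfAdjoint.one A).add hs)

lemma LinearIsometry.isSelfAdjoint_toContinuousLinearMap_of_involutive {𝕜 E : Type*} [RCLike 𝕜]
    [NormedAddCommGroup E] [InnerProductSpace 𝕜 E] [CompleteSpace E] (T : E →ₗᵢ[𝕜] E)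
    (hT : Function.Involutive T) :
    IsSelfAdjoint T.toContinuousLinearMap := by
  rw [ContinuousLinearMap.isSelfAdjoint_iff_isSymmetric]
  intro x y
  simpa [hT y] using T.inner_map_map x (T y)

lemma MeasureTheory.Lp.compMeasurePreserving_compMeasurePreserving_of_comp_ae_eq_id
    {α β E : Type*} [MeasurableSpace α] [MeasurableSpace β] [NormedAddCommGroup E]
    {p : ENNReal} {μ : Measure α} {ν : Measure β} {f : α → β} {g : β → α}
    (hf : MeasurePreserving f μ ν) (hg : MeasurePreserving g ν μ) (hgf : g ∘ f =ᵐ[μ] id)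
    (u : Lp E p μ) : compMeasurePreserving f hf (compMeasurePreserving g hg u) = u := by
  refine Lp.ext ?_
  calc _ =ᵐ[μ] (compMeasurePreserving g hg u : β → E) ∘ f := coeFn_compMeasurePreserving _ hf
    _ =ᵐ[μ] ((u : α → E) ∘ g) ∘ f :=
      hf.quasiMeasurePreserving.ae_eq_comp (coeFn_compMeasurePreserving u hg)
    _ =ᵐ[μ] u := hgf.fun_comp u

lemma map_volume_restrict_Ico_of_eqOn_add_const {f : ℝ → ℝ} {a b c : ℝ}
    (hf : EqOn f (· + c) (Ico a b)) :
    (volume.restrict (Ico a b)).map f = volume.restrict (Ico (a + c) (b + c)) := by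
  have h := (measurePreserving_add_right volume c).restrict_preimage
    (measurableSet_Ico (a := a + c) (b := b + c))
  rw [preimage_add_const_Ico, add_sub_cancel_right, add_sub_cancel_right] at h
  rw [Measure.map_congr ((ae_restrict_iff' measurableSet_Ico).2 (.of_forall hf)), h.map_eq]

lemma ContinuousLinearMap.opNorm_eq_one_of_norm_map {𝕜 E : Type*} [NontriviallyNormedField 𝕜]
    [NormedAddCommGroup E] [NormedSpace 𝕜 E] [Nontrivial E] (T : E →L[𝕜] E)
    (hT : ∀ x, ‖T x‖ = ‖x‖) : ‖T‖ = 1 := by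
  refine le_antisymm (T.opNorm_le_bound zero_le_one fun x => (hT x).trans_le (one_mul _).ge) ?_
  obtain ⟨x, hx⟩ := exists_ne (0 : E)
  have hle : 1 * ‖x‖ ≤ ‖T‖ * ‖x‖ := (one_mul ‖x‖).trans_le ((hT x).symm.trans_le (T.le_opNorm x))
  exact le_of_mul_le_mul_right hle (norm_pos_iff.2 hx)

instance : IsFiniteMeasure volIoo := by rw [volIoo]; infer_instance

instance : NeZero volIoo := ⟨by simp [volIoo]⟩

instance : Nontrivial L2Ioo := by
  refine ⟨⟨Lp.const 2 volIoo (1 : ℂ), 0, fun h => ?_⟩⟩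
  have hnorm := Lp.norm_const (μ := volIoo) (p := 2) (c := (1 : ℂ)) two_ne_zero
  rw [h, norm_zero] at hnorm
  have hpos : 0 < ‖(1 : ℂ)‖ * volIoo.real univ ^ (1 / (2 : ENNReal).toReal) := by
    simp only [norm_one, one_mul, volIoo, measureReal_restrict_apply_univ, Real.volume_real_Ioo]
    positivity
  exact hpos.ne hnorm

noncomputable def halfShift (x : ℝ) : ℝ := if x < 0 then x + 1 else x - 1

lemma measurable_halfShift : Measurable halfShift :=
  Measurable.ite measurableSet_Iio (measurable_id.add_const 1) (measurable_id.sub_const 1)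

lemma abs_sub_halfShift (x : ℝ) : |x - halfShift x| = 1 := by
  unfold halfShift; split_ifs <;> norm_num

lemma halfShift_halfShift {x : ℝ} (hx : x ∈ Ioo (-1) 1) : halfShift (halfShift x) = x := by
  obtain ⟨h₁, h₂⟩ := hx
  unfold halfShift; split_ifs <;> linarith

lemma measurePreserving_halfShift : MeasurePreserving halfShift volIoo volIoo := by
  refine ⟨measurable_halfShift, ?_⟩
  have hsplit : volIoo = volume.restrict (Ico (-1) 0) + volume.restrict (Ico 0 1) := by
    rw [volIoo, Measure.restrict_congr_set Ioo_ae_eq_Ico,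
      ← Ico_union_Ico_eq_Ico (by norm_num : (-1 : ℝ) ≤ 0) zero_le_one,
      Measure.restrict_union Ico_disjoint_Ico_same measurableSet_Ico]
  have hneg := map_volume_restrict_Ico_of_eqOn_add_const (f := halfShift) (a := -1) (b := 0)
    (c := 1) fun x hx => if_pos hx.2
  have hnonneg := map_volume_restrict_Ico_of_eqOn_add_const (f := halfShift) (a := 0) (b := 1)
    (c := -1) fun x hx => (if_neg (not_lt.2 hx.1)).trans (sub_eq_add_neg x 1)
  norm_num at hneg hnonneg
  rw [hsplit, Measure.map_add _ _ measurable_halfShift, hneg, hnonneg, add_comm]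

instance : Fact ((0 : ℝ) < 2) := ⟨two_pos⟩

lemma volIoo_eq_restrict_Ioc : volIoo = volume.restrict (Ioc (-1) (-1 + 2)) := by
  rw [volIoo, Measure.restrict_congr_set Ioo_ae_eq_Ioc]
  norm_num

lemma measurePreserving_coe_addCircle :
    MeasurePreserving ((↑) : ℝ → AddCircle (2 : ℝ)) volIoo volume :=
  volIoo_eq_restrict_Ioc ▸ AddCircle.measurePreserving_mk 2 (-1)

noncomputable def circleRep (z : AddCircle (2 : ℝ)) : ℝ := AddCircle.equivIoc 2 (-1) z

lemma measurePreserving_circleRep : MeasurePreserving circleRep volume volIoo :=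
  volIoo_eq_restrict_Ioc ▸
    (measurePreserving_subtype_coe measurableSet_Ioc).comp (AddCircle.measurePreserving_equivIoc 2)

lemma circleRep_coe {x : ℝ} (hx : x ∈ Ioc (-1) 1) : circleRep x = x := by
  rw [circleRep, AddCircle.equivIoc, QuotientAddGroup.equivIocMod_coe, toIocMod_eq_self]
  norm_num [hx.1, hx.2]

noncomputable def circleToIoo : Lp ℂ 2 (volume : Measure (AddCircle (2 : ℝ))) →L[ℂ] L2Ioo :=
  (Lp.compMeasurePreservingₗᵢ ℂ _ measurePreserving_coe_addCircle).toContinuousLinearMap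

lemma circleToIoo_surjective : Function.Surjective circleToIoo := fun f =>
  ⟨Lp.compMeasurePreserving _ measurePreserving_circleRep f,
    Lp.compMeasurePreserving_compMeasurePreserving_of_comp_ae_eq_id measurePreserving_coe_addCircle
      measurePreserving_circleRep
      ((ae_restrict_iff' measurableSet_Ioo).2 (.of_forall fun _ hx =>
        circleRep_coe (Ioo_subset_Ioc_self hx))) f⟩

noncomputable def fourierIoo (n : ℤ) : L2Ioo :=
  circleToIoo (ContinuousMap.toLp 2 volume ℂ (fourier n))

lemma coeFn_fourierIoo (n : ℤ) :
    (fourierIoo n : ℝ → ℂ) =ᵐ[volIoo] fun x => Complex.exp (π * n * x * Complex.I) := by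
  refine (Lp.coeFn_compMeasurePreserving _ _).trans ?_
  filter_upwards [measurePreserving_coe_addCircle.quasiMeasurePreserving.ae_eq_comp
    (ContinuousMap.coeFn_toLp (p := 2) (𝕜 := ℂ) volume (fourier n))] with x hx
  rw [hx, Function.comp_apply, fourier_coe_apply]
  congr 1
  push_cast
  ring

lemma span_fourierIoo_closure_eq_top : (span ℂ (range fourierIoo)).topologicalClosure = ⊤ := by
  have hdense : DenseRange (circleToIoo ∘L ContinuousMap.toLp 2 volume ℂ) :=
    circleToIoo_surjective.denseRange.comp
      (ContinuousMap.toLp_denseRange ℂ volume ℂ ENNReal.ofNat_ne_top) circleToIoo.continuous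
  have := hdense.topologicalClosure_map_submodule span_fourier_closure_eq_top
  rwa [map_span, ← range_comp] at this

noncomputable def halfShiftL2 : L2Ioo →ₗᵢ[ℂ] L2Ioo :=
  Lp.compMeasurePreservingₗᵢ ℂ halfShift measurePreserving_halfShift

lemma coeFn_halfShiftL2 (f : L2Ioo) : (halfShiftL2 f : ℝ → ℂ) =ᵐ[volIoo] f ∘ halfShift :=
  Lp.coeFn_compMeasurePreserving f measurePreserving_halfShift

lemma halfShiftL2_involutive : Function.Involutive halfShiftL2 :=
  Lp.compMeasurePreserving_compMeasurePreserving_of_comp_ae_eq_id measurePreserving_halfShift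
    measurePreserving_halfShift
    ((ae_restrict_iff' measurableSet_Ioo).2 (.of_forall fun _ => halfShift_halfShift))

lemma cexp_pi_mul_halfShift (n : ℤ) (x : ℝ) :
    Complex.exp (π * n * halfShift x * Complex.I) =
      (-1 : ℂ) ^ n * Complex.exp (π * n * x * Complex.I) := by
  obtain ⟨m, hm⟩ : ∃ m : ℤ, (π * n * halfShift x * Complex.I : ℂ) =
      π * n * x * Complex.I + n * (π * Complex.I) + m * (2 * π * Complex.I) := by
    unfold halfShift
    split_ifs
    exacts [⟨0, by push_cast; ring⟩, ⟨-n, by push_cast; ring⟩]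
  rw [hm, Complex.exp_add, Complex.exp_add, Complex.exp_int_mul, Complex.exp_pi_mul_I,
    Complex.exp_int_mul_two_pi_mul_I, mul_one, mul_comm]

lemma halfShiftL2_fourierIoo (n : ℤ) :
    halfShiftL2 (fourierIoo n) = (-1 : ℂ) ^ n • fourierIoo n := by
  refine Lp.ext ?_
  filter_upwards [coeFn_halfShiftL2 (fourierIoo n),
    measurePreserving_halfShift.quasiMeasurePreserving.ae_eq_comp (coeFn_fourierIoo n),
    Lp.coeFn_smul ((-1 : ℂ) ^ n) (fourierIoo n), coeFn_fourierIoo n] with x h₁ h₂ h₃ h₄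
  rw [h₁, h₂, h₃, Pi.smul_apply, h₄, Function.comp_apply, cexp_pi_mul_halfShift, smul_eq_mul]

noncomputable def evenPart : L2Ioo →L[ℂ] L2Ioo :=
  (2⁻¹ : ℂ) • (1 + halfShiftL2.toContinuousLinearMap)

lemma isStarProjection_evenPart : IsStarProjection evenPart :=
  IsSelfAdjoint.isStarProjection_inv_two_smul_one_add
    (halfShiftL2.isSelfAdjoint_toContinuousLinearMap_of_involutive halfShiftL2_involutive)
    (ContinuousLinearMap.ext halfShiftL2_involutive)

lemma evenPart_fourierIoo (n : ℤ) :
    evenPart (fourierIoo n) = (2⁻¹ * (1 + (-1 : ℂ) ^ n)) • fourierIoo n := by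
  simp only [evenPart, smul_apply, add_apply, one_apply_eq_self,
    LinearIsometry.coe_toContinuousLinearMap, halfShiftL2_fourierIoo]
  module

lemma evenPart_fourierIoo_two_mul (k : ℤ) :
    evenPart (fourierIoo (2 * k)) = fourierIoo (2 * k) := by
  rw [evenPart_fourierIoo, zpow_mul]
  norm_num

lemma evenPart_fourierIoo_two_mul_add_one (k : ℤ) : evenPart (fourierIoo (2 * k + 1)) = 0 := by
  rw [evenPart_fourierIoo, zpow_add₀ (by norm_num), zpow_mul]
  norm_num

lemma evenHarmonics_eq_closure_span_fourierIoo :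
    evenHarmonics = (span ℂ (range fun k : ℤ => fourierIoo (2 * k))).topologicalClosure := by
  have hgen (g : L2Ioo) (k : ℤ) : g = fourierIoo (2 * k) ↔ (g : ℝ → ℂ) =ᵐ[volIoo]
      fun x => Complex.exp (((2 * π * (k : ℝ) * x : ℝ) : ℂ) * Complex.I) := by
    rw [Lp.ext_iff]
    refine Filter.EventuallyEq.congr_right
      ((coeFn_fourierIoo (2 * k)).trans (.of_forall fun x => ?_))
    push_cast
    ring_nf
  simp only [evenHarmonics, ← hgen, range, eq_comm]

lemma evenPart_fourierIoo_mem_evenHarmonics (n : ℤ) :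
    evenPart (fourierIoo n) ∈ evenHarmonics := by
  obtain ⟨k, rfl | rfl⟩ := Int.even_or_odd' n
  · rw [evenPart_fourierIoo_two_mul, evenHarmonics_eq_closure_span_fourierIoo]
    exact le_topologicalClosure _ (subset_span ⟨k, rfl⟩)
  · rw [evenPart_fourierIoo_two_mul_add_one]
    exact zero_mem _

lemma range_evenPart : LinearMap.range (evenPart : L2Ioo →ₗ[ℂ] L2Ioo) = evenHarmonics := by
  refine le_antisymm ?_ ?_
  · rintro _ ⟨f, rfl⟩
    let W := evenHarmonics.comap (evenPart : L2Ioo →ₗ[ℂ] L2Ioo)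
    have hclosed : IsClosed (W : Set L2Ioo) :=
      (isClosed_topologicalClosure _).preimage evenPart.continuous
    have hspan : span ℂ (range fourierIoo) ≤ W :=
      span_le.2 (range_subset_iff.2 evenPart_fourierIoo_mem_evenHarmonics)
    have hf : f ∈ (span ℂ (range fourierIoo)).topologicalClosure := by
      rw [span_fourierIoo_closure_eq_top]; trivial
    exact topologicalClosure_minimal _ hspan hclosed hf
  · rw [evenHarmonics_eq_closure_span_fourierIoo]
    refine topologicalClosure_minimal _ (span_le.2 (range_subset_iff.2 fun k => ?_))
      isStarProjection_evenPart.isIdempotentElem.isClosed_range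
    exact ⟨_, evenPart_fourierIoo_two_mul k⟩

lemma norm_commutator_halfShiftL2_apply (X : L2Ioo →L[ℂ] L2Ioo)
    (hX : ∀ f : L2Ioo, (X f : ℝ → ℂ) =ᵐ[volIoo] fun x => (x : ℂ) * f x) (f : L2Ioo) :
    ‖X (halfShiftL2 f) - halfShiftL2 (X f)‖ = ‖f‖ := by
  have hpointwise : ∀ᵐ x ∂volIoo,
      ‖(X (halfShiftL2 f) - halfShiftL2 (X f) : L2Ioo) x‖ = ‖(halfShiftL2 f : ℝ → ℂ) x‖ := by
    filter_upwards [Lp.coeFn_sub (X (halfShiftL2 f)) (halfShiftL2 (X f)), hX (halfShiftL2 f),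
      coeFn_halfShiftL2 (X f),
      measurePreserving_halfShift.quasiMeasurePreserving.ae_eq_comp (hX f),
      coeFn_halfShiftL2 f] with x h₁ h₂ h₃ h₄ h₅
    rw [h₁, Pi.sub_apply, h₂, h₃, h₄, h₅, Function.comp_apply, Function.comp_apply, ← sub_mul,
      norm_mul, ← Complex.ofReal_sub, Complex.norm_real, Real.norm_eq_abs, abs_sub_halfShift,
      one_mul]
  calc _ = ‖halfShiftL2 f‖ := by
        rw [Lp.norm_def, Lp.norm_def, eLpNorm_congr_norm_ae hpointwise]
    _ = ‖f‖ := halfShiftL2.norm_map f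

lemma norm_commutator_halfShiftL2 (X : L2Ioo →L[ℂ] L2Ioo)
    (hX : ∀ f : L2Ioo, (X f : ℝ → ℂ) =ᵐ[volIoo] fun x => (x : ℂ) * f x) :
    ‖X * halfShiftL2.toContinuousLinearMap - halfShiftL2.toContinuousLinearMap * X‖ = 1 :=
  opNorm_eq_one_of_norm_map _ (norm_commutator_halfShiftL2_apply X hX)

lemma commutator_evenPart (X : L2Ioo →L[ℂ] L2Ioo) :
    X * evenPart - evenPart * X = (2⁻¹ : ℂ) •
      (X * halfShiftL2.toContinuousLinearMap - halfShiftL2.toContinuousLinearMap * X) := by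
  rw [evenPart, mul_smul_comm, smul_mul_assoc, ← smul_sub, mul_add, add_mul, mul_one, one_mul,
    add_sub_add_left_eq_sub]

theorem norm_commutator_position_projection_general (P : L2Ioo →L[ℂ] L2Ioo)
    (hPsa : IsSelfAdjoint P) (hPidem : P * P = P)
    (hPran : LinearMap.range (P : L2Ioo →ₗ[ℂ] L2Ioo) = evenHarmonics)
    (X : L2Ioo →L[ℂ] L2Ioo)
    (hX : ∀ f : L2Ioo, (X f : ℝ → ℂ) =ᵐ[volIoo] fun x => (x : ℂ) * f x) :
    ‖(2 : ℂ) • (X * P) - (2 : ℂ) • (P * X)‖ = 1 ∧ ‖X * P - P * X‖ = 1 / 2 := by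
  have hP : P = evenPart := IsStarProjection.ext ⟨hPidem, hPsa⟩ isStarProjection_evenPart
    (hPran.trans range_evenPart.symm)
  have hcomm : X * P - P * X = (2⁻¹ : ℂ) •
      (X * halfShiftL2.toContinuousLinearMap - halfShiftL2.toContinuousLinearMap * X) :=
    hP ▸ commutator_evenPart X
  rw [← smul_sub, hcomm, smul_smul, norm_smul, norm_smul, norm_commutator_halfShiftL2 X hX]
  norm_num

/-- Let `P` be the orthogonal projection of `L²((-1,1), ℂ)` onto the closed
span of the even harmonics and let `x̂` be the self-adjoint multiplication operator by the
independent variable. Then `‖2x̂P − P(2x̂)‖ = 1`, i.e. `‖x̂P − Px̂‖ = 1/2`. -/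
theorem norm_commutator_position_projection (P : L2Ioo →L[ℂ] L2Ioo)
    (hPsa : IsSelfAdjoint P) (hPidem : P * P = P)
    (hPran : LinearMap.range (P : L2Ioo →ₗ[ℂ] L2Ioo) = evenHarmonics)
    (X : L2Ioo →L[ℂ] L2Ioo) (hXsa : IsSelfAdjoint X)
    (hX : ∀ f : L2Ioo, (X f : ℝ → ℂ) =ᵐ[volIoo] fun x => (x : ℂ) * f x) :
    ‖(2 : ℂ) • (X * P) - (2 : ℂ) • (P * X)‖ = 1 ∧ ‖X * P - P * X‖ = 1 / 2 :=
  norm_commutator_position_projection_general P hPsa hPidem hPran X hX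
end
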